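/- arXiv:2010.05009 — 7 statements merged into one kernel-verified Lean document; each statement's English description precedes it below -/
import Mathlib

section
/- Let p and q be integers with 0 < p < q, gcd(p,q) = 1, p even, and q odd. Then there exists a unique nonempty list (a_1, …, a_{2n}) of even nonzero integers (uniqueness includes the length 2n) such that the continued fraction value [a_1, …, a_{2n}] equals p/q. -/
/-- The continued fraction value `[a₁, …, aₙ] = 1/(a₁ + 1/(a₂ + ⋯ + 1/aₙ))` of a
list of integers, defined recursively with `[] = 0`, using the total division of `ℚ`. -/
def cfVal : List ℤ → ℚ
  | [] => 0
  | a :: l => 1 / ((a : ℚ) + cfVal l)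

/-!
Run Euclid's algorithm with even quotients: if `r + s` is odd and `r ≠ 0`, write
`r / s = 1 / (a + t / r)` with `a` the even integer nearest to `s / r`, so `|t| < |r|`; since
`|t| = |r|` would make `r + s` even, the inequality is strict and `t + r` is again odd. The
numerators therefore reach `0`, and the parity of the numerator flips at each step, so the
length of the expansion has the parity of `r`. Conversely every tail of an expansion with even
nonzero entries has value in `(-1, 1)`, so `a` is the unique even integer at distance `< 1`
from `1 / [a, …]`, which gives uniqueness.
-/

lemma two_le_abs_of_even_of_ne_zero {a : ℤ} (he : Even a) (h0 : a ≠ 0) : 2 ≤ |a| := by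
  obtain ⟨k, rfl⟩ := he
  rcases abs_cases (k + k) with ⟨h, _⟩ | ⟨h, _⟩ <;> omega

lemma eq_of_even_sub_of_abs_sub_lt_two {a b : ℤ} (he : Even (a - b)) (h : |a - b| < 2) :
    a = b := by
  by_contra hne
  exact (two_le_abs_of_even_of_ne_zero he (sub_ne_zero.mpr hne)).not_gt h

lemma one_lt_abs_intCast_add {a : ℤ} (ha : Even a ∧ a ≠ 0) {x : ℚ} (hx : |x| < 1) :
    1 < |(a : ℚ) + x| := by
  have h2 : (2 : ℚ) ≤ |(a : ℚ)| := by exact_mod_cast two_le_abs_of_even_of_ne_zero ha.1 ha.2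
  linarith [abs_sub_abs_le_abs_add (a : ℚ) x]

lemma abs_cfVal_lt_one : ∀ {L : List ℤ}, (∀ a ∈ L, Even a ∧ a ≠ 0) → |cfVal L| < 1
  | [], _ => by simp [cfVal]
  | a :: l, h => by
    rw [List.forall_mem_cons] at h
    have hx := one_lt_abs_intCast_add h.1 (abs_cfVal_lt_one h.2)
    rw [cfVal, abs_div, abs_one, div_lt_one (one_pos.trans hx)]
    exact hx

lemma cfVal_cons_ne_zero {a : ℤ} {l : List ℤ} (h : ∀ b ∈ a :: l, Even b ∧ b ≠ 0) :
    cfVal (a :: l) ≠ 0 := by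
  rw [List.forall_mem_cons] at h
  have hx := one_lt_abs_intCast_add h.1 (abs_cfVal_lt_one h.2)
  exact one_div_ne_zero (abs_pos.mp (one_pos.trans hx))

lemma cfVal_injOn : ∀ {L L' : List ℤ}, (∀ a ∈ L, Even a ∧ a ≠ 0) →
    (∀ a ∈ L', Even a ∧ a ≠ 0) → cfVal L = cfVal L' → L = L'
  | [], [], _, _, _ => rfl
  | [], _ :: _, _, hL', h => absurd h.symm (cfVal_cons_ne_zero hL')
  | _ :: _, [], hL, _, h => absurd h (cfVal_cons_ne_zero hL)
  | a :: l, a' :: l', hL, hL', h => by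
    rw [List.forall_mem_cons] at hL hL'
    have hsum : (a : ℚ) + cfVal l = a' + cfVal l' := by
      simpa only [cfVal, one_div, inv_inj] using h
    have hl := abs_cfVal_lt_one hL.2
    have hl' := abs_cfVal_lt_one hL'.2
    have ha : a = a' := by
      refine eq_of_even_sub_of_abs_sub_lt_two (hL.1.1.sub hL'.1.1) ?_
      have hdiff : ((a - a' : ℤ) : ℚ) = cfVal l' - cfVal l := by push_cast; linarith
      have : |((a - a' : ℤ) : ℚ)| < 2 := by
        rw [hdiff]
        linarith [abs_sub (cfVal l') (cfVal l)]
      exact_mod_cast this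
    subst ha
    rw [cfVal_injOn hL.2 hL'.2 (by linarith)]

lemma exists_even_abs_sub_mul_lt {r s : ℤ} (hr : r ≠ 0) (hodd : Odd (r + s)) :
    ∃ a : ℤ, Even a ∧ |s - a * r| < |r| := by
  set n := round ((s : ℚ) / (2 * r))
  have hle : |s - 2 * n * r| ≤ |r| := by
    have hr' : (r : ℚ) ≠ 0 := by exact_mod_cast hr
    have hcast : ((s - 2 * n * r : ℤ) : ℚ) = 2 * r * ((s : ℚ) / (2 * r) - n) := by
      push_cast; field_simp
    have : |((s - 2 * n * r : ℤ) : ℚ)| ≤ |(r : ℚ)| := by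
      rw [hcast, abs_mul, abs_mul, abs_two]
      nlinarith [abs_sub_round ((s : ℚ) / (2 * r)), abs_nonneg (r : ℚ)]
    exact_mod_cast this
  refine ⟨2 * n, even_two_mul n, hle.lt_of_ne fun heq => Int.not_even_iff_odd.mpr hodd ?_⟩
  -- `s - 2nr = ±r` would make `r + s` even
  rcases abs_eq_abs.mp heq with h | h
  · exact ⟨r + n * r, by linarith⟩
  · exact ⟨n * r, by linarith⟩

lemma cfVal_cons_of_eq_div {L : List ℤ} {a t r : ℤ} (hr : r ≠ 0) (h : cfVal L = t / r) :
    cfVal (a :: L) = r / (a * r + t) := by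
  have hr' : (r : ℚ) ≠ 0 := by exact_mod_cast hr
  have hsum : (a : ℚ) + t / r = (a * r + t) / r := by field_simp
  rw [cfVal, h, hsum, one_div_div]

theorem exists_cfVal_eq_div (r s : ℤ) (hrs : |r| < |s|) (hodd : Odd (r + s)) :
    ∃ L : List ℤ, (∀ a ∈ L, Even a ∧ a ≠ 0) ∧ (Even L.length ↔ Even r) ∧
      cfVal L = r / s := by
  induction h : s.natAbs using Nat.strong_induction_on generalizing r s with
  | _ n ih =>
  rcases eq_or_ne r 0 with rfl | hr
  · exact ⟨[], by simp, by simp, by simp [cfVal]⟩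
  obtain ⟨a, ha, ht⟩ := exists_even_abs_sub_mul_lt hr hodd
  have ha0 : a ≠ 0 := by
    rintro rfl
    rw [zero_mul, sub_zero] at ht
    exact ht.not_gt hrs
  have htr : Odd (s - a * r + r) := by
    simpa only [sub_add_eq_add_sub, add_comm s r] using hodd.sub_even (ha.mul_right r)
  have hlt : r.natAbs < n := by
    rw [Int.abs_eq_natAbs, Int.abs_eq_natAbs] at hrs
    exact h ▸ (by exact_mod_cast hrs)
  obtain ⟨L, hL, hlen, hval⟩ := ih r.natAbs hlt (s - a * r) r ht htr rfl
  refine ⟨a :: L, List.forall_mem_cons.mpr ⟨⟨ha, ha0⟩, hL⟩, ?_, ?_⟩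
  · rw [List.length_cons, Nat.even_add_one, hlen, Int.not_even_iff_odd]
    exact Int.odd_add.mp htr
  · rw [cfVal_cons_of_eq_div hr hval]
    push_cast
    ring

theorem stmt0_general (p q : ℤ) (hp0 : 0 < p) (hpq : p < q)
    (hpe : Even p) (hqo : Odd q) :
    ∃! L : List ℤ, L ≠ [] ∧ (∀ a ∈ L, Even a ∧ a ≠ 0) ∧ Even L.length ∧
      cfVal L = (p : ℚ) / (q : ℚ) := by
  have hq0 : 0 < q := hp0.trans hpq
  obtain ⟨L, hL, hlen, hval⟩ := exists_cfVal_eq_div p q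
    (by rwa [abs_of_pos hp0, abs_of_pos hq0]) (hpe.add_odd hqo)
  have hne : L ≠ [] := by
    rintro rfl
    exact (div_pos (by exact_mod_cast hp0) (by exact_mod_cast hq0) : (0 : ℚ) < p / q).ne hval
  exact ⟨L, ⟨hne, hL, hlen.mpr hpe, hval⟩,
    fun L' hL' => cfVal_injOn hL'.2.1 hL (hL'.2.2.2.trans hval.symm)⟩

/-- If `0 < p < q`, `gcd(p,q) = 1`, `p` is even and `q` is odd, then there is a unique
nonempty list `(a₁, …, a_{2n})` of even nonzero integers (of even length) whose continued
fraction value is `p/q`. -/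
theorem stmt0 (p q : ℤ) (hp0 : 0 < p) (hpq : p < q) (hgcd : Int.gcd p q = 1)
    (hpe : Even p) (hqo : Odd q) :
    ∃! L : List ℤ, L ≠ [] ∧ (∀ a ∈ L, Even a ∧ a ≠ 0) ∧ Even L.length ∧
      cfVal L = (p : ℚ) / (q : ℚ) :=
  stmt0_general p q hp0 hpq hpe hqo
end

section
/- For every integer r, every n ≥ 3, every index i with 1 < i < n, and all integers a_1, …, a_{i−1}, a_{i+1}, …, a_n, one has the identity of rational numbers r + [a_1, …, a_{i−1}, 0, a_{i+1}, a_{i+2}, …, a_n] = r + [a_1, …, a_{i−2}, a_{i−1} + a_{i+1}, a_{i+2}, …, a_n]. -/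
lemma cfVal_key (v : List ℤ) (x y : ℤ) :
    cfVal (x :: 0 :: y :: v) = cfVal ((x + y) :: v) := by
  by_cases h : (y : ℚ) + cfVal v = 0
  · have hy : (y : ℚ) = -cfVal v := by linarith
    simp [cfVal, h, hy]
  · simp [cfVal, one_div_one_div, h]
    ring_nf

/-- A zero entry in the interior of a continued fraction (with an entry before and
after it) can be collapsed:
`r + [a₁, …, a_{i-1}, 0, a_{i+1}, …, aₙ] = r + [a₁, …, a_{i-1} + a_{i+1}, …, aₙ]`.
Here `u` is the (possibly empty) list `(a₁, …, a_{i-2})`, `x = a_{i-1}`, `y = a_{i+1}`,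
and `v` is the (possibly empty) list `(a_{i+2}, …, aₙ)`; the condition `1 < i < n`
is exactly that entries `a_{i-1}` and `a_{i+1}` exist. -/
theorem stmt1 (r : ℤ) (u v : List ℤ) (x y : ℤ) :
    (r : ℚ) + cfVal (u ++ x :: 0 :: y :: v) = (r : ℚ) + cfVal (u ++ (x + y) :: v) := by
  congr 1
  induction u with
  | nil => exact cfVal_key v x y
  | cons a u ih => simp [cfVal, ih]
end

section
/- Let x = p/q be a rational number in lowest terms with q ≥ 2 (q > 0). Then there exist integers a, b, c, d with 1 ≤ b, 1 ≤ d, b + d = q, a + c = p, and a·d − b·c = ±1 (so that a/b and c/d are Farey-adjacent and their mediant is p/q). Moreover the unordered pair of rationals {a/b, c/d} determined by such a quadruple is unique: any two quadruples satisfying these conditions yield the same pair of rationals. -/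
/-!
With `b + d = q` and `a + c = p`, the determinant `a * d - b * c` equals `a * q - b * p`,
so Farey parents of `p/q` are solutions of `a * q - b * p = ±1` with `0 < b < q`.
Bezout's identity provides such a solution. Coprimality makes `(a, b) ↦ a * q - b * p`
injective on `0 < b < q`, and `(c, d) = (p - a, q - b)` has the opposite determinant;
hence a second quadruple either coincides with the first or is its swap.
-/

namespace Farey

def IsParents (p q a b c d : ℤ) : Prop :=
  1 ≤ b ∧ 1 ≤ d ∧ b + d = q ∧ a + c = p ∧ (a * d - b * c = 1 ∨ a * d - b * c = -1)

variable {p q a b c d a' b' c' d' : ℤ}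

lemma mul_sub_mul_eq (hbd : b + d = q) (hac : a + c = p) :
    a * d - b * c = a * q - b * p := by
  linear_combination a * hbd - b * hac

lemma exists_mul_sub_mul_eq_one (hpq : IsCoprime p q) (hq : 2 ≤ q) :
    ∃ a b, 0 < b ∧ b < q ∧ a * q - b * p = 1 := by
  obtain ⟨u, v, huv⟩ := hpq
  have hb : (-u) % q = -u - q * (-u / q) := Int.emod_def _ _
  have hdet : (v - (-u / q) * p) * q - (-u) % q * p = 1 := by
    linear_combination huv - p * hb
  refine ⟨_, _, ?_, Int.emod_lt_of_pos _ (by omega), hdet⟩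
  refine (Int.emod_nonneg _ (by omega)).lt_of_ne fun hb0 => ?_
  rw [← hb0, zero_mul, sub_zero] at hdet
  have := Int.le_of_dvd one_pos ⟨_, hdet.symm.trans (mul_comm _ _)⟩
  omega

lemma eq_and_eq_of_mul_sub_mul_eq (hpq : IsCoprime p q) (hb : 0 < b) (hbq : b < q)
    (hb' : 0 < b') (hb'q : b' < q) (h : a * q - b * p = a' * q - b' * p) :
    a = a' ∧ b = b' := by
  have hdvd : q ∣ (b - b') * p := ⟨a - a', by linear_combination -h⟩
  have hbb' : b - b' = 0 :=
    Int.eq_zero_of_abs_lt_dvd (hpq.symm.dvd_of_dvd_mul_right hdvd)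
      (abs_lt.mpr ⟨by omega, by omega⟩)
  obtain rfl : b = b' := by omega
  exact ⟨mul_right_cancel₀ (b := q) (by omega) (by linear_combination h), rfl⟩

lemma IsParents.eq_or_swap (hpq : IsCoprime p q) (h : IsParents p q a b c d)
    (h' : IsParents p q a' b' c' d') :
    (a' = a ∧ b' = b ∧ c' = c ∧ d' = d) ∨ (a' = c ∧ b' = d ∧ c' = a ∧ d' = b) := by
  obtain ⟨hb, hd, hbd, hac, hdet⟩ := h
  obtain ⟨hb', hd', hbd', hac', hdet'⟩ := h'
  rw [mul_sub_mul_eq hbd hac] at hdet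
  rw [mul_sub_mul_eq hbd' hac'] at hdet'
  have hswap : c' * q - d' * p = -(a' * q - b' * p) := by
    linear_combination q * hac' - p * hbd'
  rcases (by omega : a * q - b * p = a' * q - b' * p ∨ a * q - b * p = c' * q - d' * p)
    with hsame | hopp
  · obtain ⟨rfl, rfl⟩ := eq_and_eq_of_mul_sub_mul_eq hpq (by omega) (by omega) (by omega)
      (by omega) hsame
    omega
  · obtain ⟨rfl, rfl⟩ := eq_and_eq_of_mul_sub_mul_eq hpq (by omega) (by omega) (by omega)
      (by omega) hopp
    omega

end Farey

open Farey in
/-- Every rational `x = p/q` in lowest terms with `q ≥ 2` has Farey parents: there are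
integers `a, b, c, d` with `1 ≤ b`, `1 ≤ d`, `b + d = q`, `a + c = p` and
`a·d − b·c = ±1` (so `a/b` and `c/d` are Farey-adjacent with mediant `p/q`); moreover
the unordered pair of rationals `{a/b, c/d}` is uniquely determined by these conditions. -/
theorem stmt2 (x : ℚ) (hx : 2 ≤ x.den) :
    (∃ a b c d : ℤ, 1 ≤ b ∧ 1 ≤ d ∧ b + d = (x.den : ℤ) ∧ a + c = x.num ∧
        (a * d - b * c = 1 ∨ a * d - b * c = -1)) ∧
      ∀ a b c d a' b' c' d' : ℤ,
        1 ≤ b → 1 ≤ d → b + d = (x.den : ℤ) → a + c = x.num →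
          (a * d - b * c = 1 ∨ a * d - b * c = -1) →
        1 ≤ b' → 1 ≤ d' → b' + d' = (x.den : ℤ) → a' + c' = x.num →
          (a' * d' - b' * c' = 1 ∨ a' * d' - b' * c' = -1) →
        ({(a : ℚ) / (b : ℚ), (c : ℚ) / (d : ℚ)} : Set ℚ) =
          {(a' : ℚ) / (b' : ℚ), (c' : ℚ) / (d' : ℚ)} := by
  have hq : (2 : ℤ) ≤ x.den := by exact_mod_cast hx
  have hpq : IsCoprime x.num x.den := Int.isCoprime_iff_gcd_eq_one.mpr x.reduced
  refine ⟨?_, fun a b c d a' b' c' d' hb hd hbd hac hdet hb' hd' hbd' hac' hdet' => ?_⟩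
  · obtain ⟨a, b, hb, hbq, hdet⟩ := exists_mul_sub_mul_eq_one hpq hq
    exact ⟨a, b, x.num - a, x.den - b, by omega, by omega, by ring, by ring,
      Or.inl (by linear_combination hdet)⟩
  · rcases IsParents.eq_or_swap hpq ⟨hb, hd, hbd, hac, hdet⟩ ⟨hb', hd', hbd', hac', hdet'⟩
      with ⟨rfl, rfl, rfl, rfl⟩ | ⟨rfl, rfl, rfl, rfl⟩
    · rfl
    · exact Set.pair_comm _ _
end

section
/- Let x be a rational number that is not an integer, and let u be either of the two Farey parents of x. Then d(x) − d(u) ∈ {0, 1}; that is, each Farey parent of x has depth equal to d(x) − 1 or d(x). -/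
/-- `u` and `v` are the two Farey parents of `x`: there are integers `a, b, c, d` with
`1 ≤ b, d`, `b + d = q`, `a + c = p`, `a·d − b·c = ±1`, `u = a/b` and `v = c/d`,
where `x = p/q` in lowest terms. -/
def IsFareyParents (x u v : ℚ) : Prop :=
  ∃ a b c d : ℤ, 1 ≤ b ∧ 1 ≤ d ∧ b + d = (x.den : ℤ) ∧ a + c = x.num ∧
    (a * d - b * c = 1 ∨ a * d - b * c = -1) ∧
    u = (a : ℚ) / (b : ℚ) ∧ v = (c : ℚ) / (d : ℚ)

/-- The graph of the depth function on `ℚ`: integers have depth `0`, and otherwise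
`d(x) = 1 + min(d(u), d(v))` where `u, v` are the two Farey parents of `x`. -/
inductive DepthRel : ℚ → ℕ → Prop
  | int (x : ℚ) (h : x.den = 1) : DepthRel x 0
  | step (x u v : ℚ) (m k : ℕ) (h : x.den ≠ 1) (hp : IsFareyParents x u v)
      (hu : DepthRel u m) (hv : DepthRel v k) : DepthRel x (1 + min m k)

/-- The depth `d(x)` of a rational number. -/
noncomputable def fareyDepth (x : ℚ) : ℕ := sInf {n | DepthRel x n}

lemma coprime_of_bezout {a b s t : ℤ} (h : s * a + t * b = 1) :
    Nat.Coprime a.natAbs b.natAbs :=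
  Int.isCoprime_iff_gcd_eq_one.mp ⟨s, t, h⟩

/-- Structural facts about a Farey-parent pair, expressed via `num`/`den`. -/
lemma parents_spec {x u v : ℚ} (hp : IsFareyParents x u v) :
    (u.den : ℤ) + (v.den : ℤ) = (x.den : ℤ) ∧ u.num + v.num = x.num ∧
    (u.num * (v.den : ℤ) - (u.den : ℤ) * v.num = 1 ∨
      u.num * (v.den : ℤ) - (u.den : ℤ) * v.num = -1) := by
  obtain ⟨a, b, c, d, hb, hd, hbd, hac, hdet, hu, hv⟩ := hp
  have hcab : Nat.Coprime a.natAbs b.natAbs := by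
    rcases hdet with h | h
    · exact coprime_of_bezout (s := d) (t := -c) (by linarith)
    · exact coprime_of_bezout (s := -d) (t := c) (by linarith)
  have hccd : Nat.Coprime c.natAbs d.natAbs := by
    rcases hdet with h | h
    · exact coprime_of_bezout (s := -b) (t := a) (by linarith)
    · exact coprime_of_bezout (s := b) (t := -a) (by linarith)
  have hun : u.num = a := by rw [hu]; exact Rat.num_div_eq_of_coprime (by omega) hcab
  have hud : (u.den : ℤ) = b := by rw [hu]; exact Rat.den_div_eq_of_coprime (by omega) hcab
  have hvn : v.num = c := by rw [hv]; exact Rat.num_div_eq_of_coprime (by omega) hccd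
  have hvd : (v.den : ℤ) = d := by rw [hv]; exact Rat.den_div_eq_of_coprime (by omega) hccd
  rw [hun, hud, hvn, hvd]
  exact ⟨hbd, hac, hdet⟩

lemma parents_den_lt {x u v : ℚ} (hp : IsFareyParents x u v) :
    u.den < x.den ∧ v.den < x.den := by
  obtain ⟨h1, _, _⟩ := parents_spec hp
  have := u.pos
  have := v.pos
  omega

lemma int_eq_of_dvd_sub {q b b' t : ℤ} (h2 : 2 ≤ q) (hb1 : 1 ≤ b) (hb2 : b ≤ q - 1)
    (hb1' : 1 ≤ b') (hb2' : b' ≤ q - 1) (ht : b' - b = t * q) : b = b' := by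
  have hd : q ∣ b' - b := ⟨t, by linarith [ht]⟩
  have := Int.eq_zero_of_abs_lt_dvd hd (by rw [abs_lt]; omega)
  omega

lemma int_sum_eq_of_dvd {q b b' t : ℤ} (h2 : 2 ≤ q) (hb1 : 1 ≤ b) (hb2 : b ≤ q - 1)
    (hb1' : 1 ≤ b') (hb2' : b' ≤ q - 1) (ht : b' + b = t * q) : b' + b = q := by
  have hk1 : t = 1 := by
    rcases lt_trichotomy t 1 with h | h | h
    · have ht0 : t ≤ 0 := by omega
      nlinarith
    · exact h
    · have : 2 ≤ t := by omega
      nlinarith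
  rw [hk1, one_mul] at ht
  omega

lemma rat_ext' {y z : ℚ} (h1 : y.num = z.num) (h2 : (y.den : ℤ) = (z.den : ℤ)) : y = z :=
  Rat.ext h1 (by omega)

/-- The Farey parents of `x` are unique up to swapping. -/
lemma parents_unique {x u v u' v' : ℚ} (hx : x.den ≠ 1)
    (hp : IsFareyParents x u v) (hp' : IsFareyParents x u' v') :
    (u = u' ∧ v = v') ∨ (u = v' ∧ v = u') := by
  obtain ⟨hbd, hac, hdet⟩ := parents_spec hp
  obtain ⟨hbd', hac', hdet'⟩ := parents_spec hp'
  set p := x.num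
  set q := (x.den : ℤ) with hqdef
  have hq2 : 2 ≤ q := by have := x.pos; omega
  set a := u.num; set b := (u.den : ℤ) with hbdef
  set c := v.num; set d := (v.den : ℤ) with hddef
  set a' := u'.num; set b' := (u'.den : ℤ) with hbdef'
  set c' := v'.num; set d' := (v'.den : ℤ) with hddef'
  have hb1 : 1 ≤ b := by have := u.pos; omega
  have hd1 : 1 ≤ d := by have := v.pos; omega
  have hb1' : 1 ≤ b' := by have := u'.pos; omega
  have hd1' : 1 ≤ d' := by have := v'.pos; omega
  have hb2 : b ≤ q - 1 := by omega
  have hb2' : b' ≤ q - 1 := by omega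
  have he : a * q - b * p = a * d - b * c := by rw [← hbd, ← hac]; ring
  have he' : a' * q - b' * p = a' * d' - b' * c' := by rw [← hbd', ← hac']; ring
  have hcv : c * q - d * p = -(a * d - b * c) := by rw [← hbd, ← hac]; ring
  rcases hdet with hE | hE <;> rcases hdet' with hE' | hE'
  · -- e = 1, e' = 1
    have hE1 : a * q - b * p = 1 := by rw [he]; exact hE
    have hE1' : a' * q - b' * p = 1 := by rw [he']; exact hE'
    have ht : b' - b = (a * b' - a' * b) * q := by linear_combination b * hE1' - b' * hE1
    have hbb : b = b' := int_eq_of_dvd_sub hq2 hb1 hb2 hb1' hb2' ht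
    have hz : (a - a') * q = 0 := by linear_combination hE1 - hE1' + p * hbb
    have haa : a = a' := by
      rcases mul_eq_zero.mp hz with h | h <;> omega
    exact Or.inl ⟨rat_ext' (by omega) (by omega), rat_ext' (by omega) (by omega)⟩
  · -- e = 1, e' = -1
    have hE1 : a * q - b * p = 1 := by rw [he]; exact hE
    have hE1' : a' * q - b' * p = -1 := by rw [he']; exact hE'
    have ht : b' + b = (a * b' - a' * b) * q := by linear_combination b * hE1' - b' * hE1
    have hsum : b' + b = q := int_sum_eq_of_dvd hq2 hb1 hb2 hb1' hb2' ht
    have hb'd : b' = d := by omega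
    have hc1 : c * q - d * p = -1 := by rw [hcv, hE]
    have hz : (a' - c) * q = 0 := by linear_combination hE1' - hc1 + p * hb'd
    have hac2 : a' = c := by
      rcases mul_eq_zero.mp hz with h | h <;> omega
    exact Or.inr ⟨rat_ext' (by omega) (by omega), rat_ext' (by omega) (by omega)⟩
  · -- e = -1, e' = 1
    have hE1 : a * q - b * p = -1 := by rw [he]; exact hE
    have hE1' : a' * q - b' * p = 1 := by rw [he']; exact hE'
    have ht : b' + b = (a' * b - a * b') * q := by linear_combination b' * hE1 - b * hE1'
    have hsum : b' + b = q := int_sum_eq_of_dvd hq2 hb1 hb2 hb1' hb2' ht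
    have hb'd : b' = d := by omega
    have hc1 : c * q - d * p = 1 := by rw [hcv, hE]; ring
    have hz : (a' - c) * q = 0 := by linear_combination hE1' - hc1 + p * hb'd
    have hac2 : a' = c := by
      rcases mul_eq_zero.mp hz with h | h <;> omega
    exact Or.inr ⟨rat_ext' (by omega) (by omega), rat_ext' (by omega) (by omega)⟩
  · -- e = -1, e' = -1
    have hE1 : a * q - b * p = -1 := by rw [he]; exact hE
    have hE1' : a' * q - b' * p = -1 := by rw [he']; exact hE'
    have ht : b' - b = (a' * b - a * b') * q := by linear_combination b' * hE1 - b * hE1'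
    have hbb : b = b' := int_eq_of_dvd_sub hq2 hb1 hb2 hb1' hb2' ht
    have hz : (a - a') * q = 0 := by linear_combination hE1 - hE1' + p * hbb
    have haa : a = a' := by
      rcases mul_eq_zero.mp hz with h | h <;> omega
    exact Or.inl ⟨rat_ext' (by omega) (by omega), rat_ext' (by omega) (by omega)⟩

/-- Every non-integer rational has a pair of Farey parents. -/
lemma exists_parents (x : ℚ) (hx : x.den ≠ 1) : ∃ u v, IsFareyParents x u v := by
  set p := x.num with hpdef
  set q := (x.den : ℤ) with hqdef
  have hq2 : 2 ≤ q := by have := x.pos; omega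
  have hcop : IsCoprime p q := by
    rw [Int.isCoprime_iff_gcd_eq_one]
    simpa [Int.gcd, hqdef] using x.reduced
  obtain ⟨s, t, hst⟩ := hcop
  set b := (-s) % q with hbdef
  have hb0 : 0 ≤ b := Int.emod_nonneg _ (by omega)
  have hbq : b < q := Int.emod_lt_of_pos _ (by omega)
  have hdvd : q ∣ b * p + 1 := by
    refine ⟨t - ((-s) / q) * p, ?_⟩
    have hbd : b = -s - q * ((-s) / q) := Int.emod_def (-s) q
    rw [hbd]
    linear_combination -hst
  have hbne : b ≠ 0 := by
    intro h
    rw [h] at hdvd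
    simp at hdvd
    have := Int.le_of_dvd (by norm_num) hdvd
    omega
  set a := (b * p + 1) / q with hadef
  have ha : a * q = b * p + 1 := Int.ediv_mul_cancel hdvd
  refine ⟨(a : ℚ) / (b : ℚ), ((p - a : ℤ) : ℚ) / ((q - b : ℤ) : ℚ),
    a, b, p - a, q - b, by omega, by omega, by omega, by omega, ?_, rfl, rfl⟩
  left
  linear_combination ha

lemma depthRel_exists : ∀ (N : ℕ) (x : ℚ), x.den ≤ N → ∃ n, DepthRel x n := by
  intro N
  induction N with
  | zero => intro x hx; have := x.pos; omega
  | succ N ih =>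
    intro x hx
    by_cases h1 : x.den = 1
    · exact ⟨0, DepthRel.int x h1⟩
    · obtain ⟨u, v, hp⟩ := exists_parents x h1
      obtain ⟨hu, hv⟩ := parents_den_lt hp
      obtain ⟨m, hm⟩ := ih u (by omega)
      obtain ⟨k, hk⟩ := ih v (by omega)
      exact ⟨1 + min m k, DepthRel.step x u v m k h1 hp hm hk⟩

lemma depthRel_unique : ∀ (N : ℕ) (x : ℚ), x.den ≤ N →
    ∀ {m k : ℕ}, DepthRel x m → DepthRel x k → m = k := by
  intro N
  induction N with
  | zero => intro x hx; have := x.pos; omega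
  | succ N ih =>
    intro x hx m k hm hk
    cases hm with
    | int _ h =>
      cases hk with
      | int => rfl
      | step _ _ _ _ _ h' => exact absurd h h'
    | step _ u v m1 k1 h hpuv hu hv =>
      cases hk with
      | int _ h' => exact absurd h' h
      | step _ u' v' m1' k1' h' hp' hu' hv' =>
        obtain ⟨hdu, hdv⟩ := parents_den_lt hpuv
        obtain ⟨hdu', hdv'⟩ := parents_den_lt hp'
        rcases parents_unique h hpuv hp' with ⟨rfl, rfl⟩ | ⟨rfl, rfl⟩
        · have h1 := ih u (by omega) hu hu'
          have h2 := ih v (by omega) hv hv'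
          omega
        · have h1 := ih u (by omega) hu hv'
          have h2 := ih v (by omega) hv hu'
          omega

lemma fareyDepth_eq {x : ℚ} {n : ℕ} (h : DepthRel x n) : fareyDepth x = n := by
  have hset : {m | DepthRel x m} = {n} := by
    ext m
    simp only [Set.mem_setOf_eq, Set.mem_singleton_iff]
    exact ⟨fun hm => depthRel_unique x.den x le_rfl hm h,
      fun hm => hm ▸ h⟩
  rw [fareyDepth, hset, csInf_singleton]

lemma fareyDepth_spec (x : ℚ) : DepthRel x (fareyDepth x) := by
  obtain ⟨n, hn⟩ := depthRel_exists x.den x le_rfl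
  rwa [fareyDepth_eq hn]

lemma depth_formula {x u v : ℚ} (hx : x.den ≠ 1) (hp : IsFareyParents x u v) :
    fareyDepth x = 1 + min (fareyDepth u) (fareyDepth v) :=
  fareyDepth_eq (DepthRel.step x u v _ _ hx hp (fareyDepth_spec u) (fareyDepth_spec v))

/-- If `u, v` are Farey neighbors with `u.den < v.den`, then `u` and a companion `w`
are the Farey parents of `v`, and `u, w` are again Farey neighbors. -/
lemma neighbor_step {u v : ℚ} (hlt : u.den < v.den)
    (hdet : u.num * (v.den : ℤ) - (u.den : ℤ) * v.num = 1 ∨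
      u.num * (v.den : ℤ) - (u.den : ℤ) * v.num = -1) :
    ∃ w : ℚ, IsFareyParents v u w ∧ w.den + u.den = v.den ∧
      (u.num * (w.den : ℤ) - (u.den : ℤ) * w.num = 1 ∨
        u.num * (w.den : ℤ) - (u.den : ℤ) * w.num = -1) := by
  set a := u.num with hadef
  set b := (u.den : ℤ) with hbdef
  set c := v.num - u.num with hcdef
  set d := (v.den : ℤ) - (u.den : ℤ) with hddef
  have hb1 : 1 ≤ b := by have := u.pos; omega
  have hd1 : 1 ≤ d := by have hd := v.pos; simp only [hddef]; omega
  have hdet2 : a * d - b * c = 1 ∨ a * d - b * c = -1 := by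
    rcases hdet with h | h
    · left; rw [hcdef, hddef]; linear_combination h
    · right; rw [hcdef, hddef]; linear_combination h
  have hccd : Nat.Coprime c.natAbs d.natAbs := by
    rcases hdet2 with h | h
    · exact coprime_of_bezout (s := -b) (t := a) (by linarith)
    · exact coprime_of_bezout (s := b) (t := -a) (by linarith)
  refine ⟨(c : ℚ) / (d : ℚ), ⟨a, b, c, d, hb1, hd1, by omega, by omega, hdet2,
    (Rat.num_div_den u).symm.trans (by norm_cast), rfl⟩, ?_, ?_⟩
  · have := Rat.den_div_eq_of_coprime (a := c) (by omega) hccd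
    omega
  · rw [Rat.num_div_eq_of_coprime (by omega) hccd,
      Rat.den_div_eq_of_coprime (by omega) hccd]
    exact hdet2

lemma neighbor_depth : ∀ (N : ℕ) (u v : ℚ), u.den + v.den ≤ N →
    (u.num * (v.den : ℤ) - (u.den : ℤ) * v.num = 1 ∨
      u.num * (v.den : ℤ) - (u.den : ℤ) * v.num = -1) →
    fareyDepth u ≤ fareyDepth v + 1 ∧ fareyDepth v ≤ fareyDepth u + 1 := by
  intro N
  induction N with
  | zero => intro u v h _; have := u.pos; have := v.pos; omega
  | succ N ih =>
    intro u v hN hdet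
    rcases lt_trichotomy u.den v.den with hlt | heq | hlt
    · obtain ⟨w, hp, hden, hdet'⟩ := neighbor_step hlt hdet
      have hv1 : v.den ≠ 1 := by have := u.pos; omega
      have hform := depth_formula hv1 hp
      have hih := ih u w (by have := u.pos; omega) hdet'
      omega
    · -- equal denominators: both are integers
      have hb : (u.den : ℤ) ∣ 1 := by
        rcases hdet with h | h
        · exact ⟨u.num - v.num, by rw [heq] at h ⊢; linear_combination -h⟩
        · exact ⟨v.num - u.num, by rw [heq] at h ⊢; linear_combination h⟩
      have hu1 : u.den = 1 := by
        have := Int.le_of_dvd (by norm_num) hb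
        have := u.pos
        omega
      have hv1 : v.den = 1 := by omega
      rw [fareyDepth_eq (DepthRel.int u hu1), fareyDepth_eq (DepthRel.int v hv1)]
      omega
    · have hdetsym : v.num * (u.den : ℤ) - (v.den : ℤ) * u.num = 1 ∨
          v.num * (u.den : ℤ) - (v.den : ℤ) * u.num = -1 := by
        rcases hdet with h | h
        · right; linear_combination -h
        · left; linear_combination -h
      obtain ⟨w, hp, hden, hdet'⟩ := neighbor_step hlt hdetsym
      have hu1 : u.den ≠ 1 := by have := v.pos; omega
      have hform := depth_formula hu1 hp
      have hih := ih v w (by have := v.pos; omega) hdet'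
      omega

/-- If `x` is not an integer and `u, v` are its Farey parents, then each parent has
depth equal to `d(x)` or `d(x) − 1`; i.e. `d(x) − d(parent) ∈ {0, 1}`. -/
theorem stmt3 (x u v : ℚ) (hx : x.den ≠ 1) (hp : IsFareyParents x u v) :
    (fareyDepth x = fareyDepth u ∨ fareyDepth x = fareyDepth u + 1) ∧
      (fareyDepth x = fareyDepth v ∨ fareyDepth x = fareyDepth v + 1) := by
  obtain ⟨hbd, hac, hdet⟩ := parents_spec hp
  have hnb := neighbor_depth (u.den + v.den) u v le_rfl hdet
  have hform := depth_formula hx hp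
  omega
end

section
/- Let a be a nonempty list of even nonzero integers. Then d([a]) = d([rev(a)]) and d([a]) = d([−a]), where rev(a) is the reversal of a and −a is the list obtained by negating every entry of a. -/
/-!
The depth is invariant under `x ↦ -x` and `x ↦ x + t` (`t ∈ ℤ`) and grows by at most one under
`x ↦ x⁻¹`. Conversely, descending to the parent of smaller depth shows that a rational of depth
`n` is, up to an integer shift, the ratio `p / q` of the first column `(q, p)` of a product of `n`
matrices `!![b, 1; 1, 0]`. So `d(x)` is the least number of factors of such a product.

If all `|aᵢ| ≥ 2`, then `[a] = p / q` and `[rev a] = r / q`, where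
`!![q, r; p, s] = ∏ !![aᵢ, 1; 1, 0]`: reversing the product transposes it. In a unimodular integer
matrix the second column is determined by the first up to sign and adding a multiple of the first,
so `r / q` modulo `ℤ` and sign depends only on `p / q` modulo `ℤ`. Hence a shortest product for
`[a]` yields one of the same length for `[rev a]`.
-/

lemma Rat.num_den_div_of_isCoprime {a b : ℤ} (hb : 0 < b) (h : IsCoprime a b) :
    ((a : ℚ) / b).num = a ∧ (((a : ℚ) / b).den : ℤ) = b :=
  have hab : Nat.Coprime a.natAbs b.natAbs := Int.isCoprime_iff_gcd_eq_one.1 h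
  ⟨Rat.num_div_eq_of_coprime hb hab, Rat.den_div_eq_of_coprime hb hab⟩

lemma Rat.num_add_intCast (x : ℚ) (t : ℤ) : (x + t).num = x.num + t * x.den := by
  have h := Rat.mul_den_eq_num (x + t)
  rw [Rat.add_intCast_den, add_mul, Rat.mul_den_eq_num] at h
  exact_mod_cast h.symm

lemma Rat.num_sub_intCast (x : ℚ) (t : ℤ) : (x - t).num = x.num - t * x.den := by
  have := Rat.num_add_intCast x (-t)
  push_cast at this
  rw [← sub_eq_add_neg] at this
  rw [this]; ring

lemma isCoprime_of_isUnit_sub {R : Type*} [CommRing R] {a b c d : R} (h : IsUnit (a * d - b * c)) :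
    IsCoprime a b := by
  obtain ⟨w, hw⟩ := h.exists_left_inv
  exact ⟨w * d, -(w * c), by linear_combination hw⟩

lemma Matrix.isCoprime_of_isUnit_det {R : Type*} [CommRing R] {M : Matrix (Fin 2) (Fin 2) R}
    (hM : IsUnit M.det) : IsCoprime (M 0 0) (M 1 0) :=
  isCoprime_of_isUnit_sub (c := M 0 1) (d := M 1 1) <| by
    rwa [Matrix.det_fin_two, mul_comm (M 0 1)] at hM

lemma Int.exists_mul_self_eq_one_of_isCoprime {a b c d : ℤ} (ha : a ≠ 0) (hab : IsCoprime a b)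
    (hcd : IsCoprime c d) (h : a * d = b * c) : ∃ ε : ℤ, ε * ε = 1 ∧ c = ε * a ∧ d = ε * b := by
  have h1 : a ∣ c := hab.dvd_of_dvd_mul_left ⟨d, h.symm⟩
  have h2 : c ∣ a := hcd.dvd_of_dvd_mul_left ⟨b, by linear_combination h⟩
  obtain ⟨ε, hε, hc⟩ : ∃ ε : ℤ, ε * ε = 1 ∧ c = ε * a := by
    rcases Int.natAbs_eq_natAbs_iff.1 (Int.natAbs_eq_of_dvd_dvd h2 h1) with h | h
    · exact ⟨1, by norm_num, by omega⟩
    · exact ⟨-1, by norm_num, by omega⟩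
  exact ⟨ε, hε, hc, mul_left_cancel₀ ha (by linear_combination h + b * hc)⟩

lemma div_eq_det_mul_div_add_of_div_eq_add {M N : Matrix (Fin 2) (Fin 2) ℤ}
    (hM : IsUnit M.det) (hN : IsUnit N.det) (hM0 : M 0 0 ≠ 0) (hN0 : N 0 0 ≠ 0) {t : ℤ}
    (hval : (M 1 0 : ℚ) / M 0 0 = N 1 0 / N 0 0 + t) :
    ∃ k : ℤ, (M 0 1 : ℚ) / M 0 0 = M.det * N.det * ((N 0 1 : ℚ) / N 0 0) + k := by
  have hcopM := Matrix.isCoprime_of_isUnit_det hM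
  have hcopN := (Matrix.isCoprime_of_isUnit_det hN).add_mul_left_right t
  have hδN := Int.isUnit_mul_self hN
  rw [Matrix.det_fin_two] at hδN
  rw [Matrix.det_fin_two M, Matrix.det_fin_two N]
  set e := M 0 0; set f := M 0 1; set g := M 1 0; set h := M 1 1
  set e' := N 0 0; set f' := N 0 1; set g' := N 1 0; set h' := N 1 1
  have hcross : e * (g' + e' * t) = g * e' := by
    have : (e * (g' + e' * t) : ℚ) = g * e' := by
      field_simp at hval; linear_combination -hval
    exact_mod_cast this
  -- the first columns `(e, g)` and `(e', g' + t e')` are primitive and proportional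
  obtain ⟨ε, hε, he', hg'⟩ := Int.exists_mul_self_eq_one_of_isCoprime hM0 hcopM hcopN hcross
  have hdet' : e * (h' + t * f') - f' * g = ε * (e' * h' - f' * g') := by
    linear_combination (-(e * h' + e * t * f' - f' * g)) * hε + ε * f' * hg'
      - ε * (h' + t * f') * he'
  -- modulo `e`, the two determinant identities read `f g ≡ -det M` and `f' g ≡ -ε det N`
  refine ⟨ε * (e' * h' - f' * g') * ((h' + t * f') * f - h * f'), ?_⟩
  have hint : f * e' = (e * h - f * g) * (e' * h' - f' * g') * f' * e
      + ε * (e' * h' - f' * g') * ((h' + t * f') * f - h * f') * e * e' := by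
    linear_combination ((e * h - f * g) * (e' * h' - f' * g') * f' * e
        - e' * f * (e' * h' - f' * g') ^ 2) * hε - e' * f * hδN
      - ε * (e' * h' - f' * g') * e' * f * hdet'
      + ε * (e * h - f * g) * (e' * h' - f' * g') * f' * he'
  have hintQ := congrArg (Int.cast : ℤ → ℚ) hint
  push_cast at hintQ ⊢
  have heQ : (e : ℚ) ≠ 0 := by exact_mod_cast hM0
  have he'Q : (e' : ℚ) ≠ 0 := by exact_mod_cast hN0
  field_simp
  linear_combination hintQ

lemma isFareyParents_iff {x u v : ℚ} : IsFareyParents x u v ↔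
    (u.den : ℤ) + v.den = x.den ∧ u.num + v.num = x.num ∧
      IsUnit (u.num * v.den - u.den * v.num) := by
  constructor
  · rintro ⟨a, b, c, d, hb, hd, hbd, hac, hdet, rfl, rfl⟩
    rw [← Int.isUnit_iff] at hdet
    have hcd : IsUnit (c * b - d * a) := by
      convert hdet.neg using 1; ring
    obtain ⟨hu1, hu2⟩ := Rat.num_den_div_of_isCoprime hb (isCoprime_of_isUnit_sub hdet)
    obtain ⟨hv1, hv2⟩ := Rat.num_den_div_of_isCoprime hd (isCoprime_of_isUnit_sub hcd)
    rw [hu1, hu2, hv1, hv2]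
    exact ⟨hbd, hac, hdet⟩
  · rintro ⟨hden, hnum, hdet⟩
    exact ⟨u.num, u.den, v.num, v.den, by exact_mod_cast u.pos, by exact_mod_cast v.pos, hden, hnum,
      Int.isUnit_iff.1 hdet, (Rat.num_div_den u).symm, (Rat.num_div_den v).symm⟩

lemma IsFareyParents.symm {x u v : ℚ} (h : IsFareyParents x u v) : IsFareyParents x v u := by
  rw [isFareyParents_iff] at h ⊢
  obtain ⟨hden, hnum, hdet⟩ := h
  exact ⟨by omega, by omega, by convert hdet.neg using 1; ring⟩

lemma IsFareyParents.neg {x u v : ℚ} (h : IsFareyParents x u v) :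
    IsFareyParents (-x) (-u) (-v) := by
  rw [isFareyParents_iff] at h ⊢
  obtain ⟨hden, hnum, hdet⟩ := h
  simp only [Rat.neg_den, Rat.neg_num]
  exact ⟨hden, by omega, by convert hdet.neg using 1; ring⟩

lemma IsFareyParents.add_intCast {x u v : ℚ} (h : IsFareyParents x u v) (t : ℤ) :
    IsFareyParents (x + t) (u + t) (v + t) := by
  rw [isFareyParents_iff] at h ⊢
  obtain ⟨hden, hnum, hdet⟩ := h
  simp only [Rat.add_intCast_den, Rat.num_add_intCast]
  exact ⟨hden, by rw [← hnum, ← hden]; ring, by convert hdet using 1; ring⟩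

lemma IsFareyParents.sub_intCast {x u v : ℚ} (h : IsFareyParents x u v) (t : ℤ) :
    IsFareyParents (x - t) (u - t) (v - t) := by
  simpa [sub_eq_add_neg] using h.add_intCast (-t)

lemma IsFareyParents.den_ne_one {x u v : ℚ} (h : IsFareyParents x u v) : x.den ≠ 1 := by
  obtain ⟨hden, -, -⟩ := isFareyParents_iff.1 h
  have := u.pos; have := v.pos
  omega

lemma IsFareyParents.inv_of_pos {x u v : ℚ} (h : IsFareyParents x u v) (hx : 0 < x)
    (hxinv : x⁻¹.den ≠ 1) : IsFareyParents x⁻¹ u⁻¹ v⁻¹ := by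
  rw [isFareyParents_iff] at h ⊢
  obtain ⟨hden, hnum, hdet⟩ := h
  have hp : 2 ≤ x.num := by
    have := Rat.num_pos.2 hx
    simp only [Rat.den_inv, this.ne', if_false] at hxinv
    omega
  have hq : 0 < (x.den : ℤ) := by exact_mod_cast x.pos
  have hδ := Int.isUnit_iff.1 hdet
  have hu_den : (0 : ℤ) < u.den := by exact_mod_cast u.pos
  have hv_den : (0 : ℤ) < v.den := by exact_mod_cast v.pos
  -- `q a - p b = a d - b c = p d - q c` for `x = p/q`, `u = a/b`, `v = c/d`
  have hu : 0 < u.num := by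
    refine pos_of_mul_pos_right (a := (x.den : ℤ)) ?_ hq.le
    have : (x.den : ℤ) * u.num = x.num * u.den + (u.num * v.den - u.den * v.num) := by
      rw [← hden, ← hnum]; ring
    rcases hδ with hδ | hδ <;> nlinarith
  have hv : 0 < v.num := by
    refine pos_of_mul_pos_right (a := (x.den : ℤ)) ?_ hq.le
    have : (x.den : ℤ) * v.num = x.num * v.den - (u.num * v.den - u.den * v.num) := by
      rw [← hden, ← hnum]; ring
    rcases hδ with hδ | hδ <;> nlinarith
  simp only [Rat.num_inv, Rat.den_inv, Int.sign_eq_one_of_pos hu, Int.sign_eq_one_of_pos hv,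
    Int.sign_eq_one_of_pos (Rat.num_pos.2 hx), hu.ne', hv.ne', (Rat.num_pos.2 hx).ne', if_false,
    one_mul, Int.natCast_natAbs, abs_of_pos hu, abs_of_pos hv, abs_of_pos (Rat.num_pos.2 hx)]
  exact ⟨hnum, hden, by convert hdet.neg using 1; ring⟩

lemma IsFareyParents.inv {x u v : ℚ} (h : IsFareyParents x u v) (hxinv : x⁻¹.den ≠ 1) :
    IsFareyParents x⁻¹ u⁻¹ v⁻¹ := by
  rcases lt_trichotomy x 0 with hx | rfl | hx
  · have := h.neg.inv_of_pos (neg_pos.2 hx) (by rwa [inv_neg, Rat.neg_den])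
    simpa only [inv_neg, neg_neg] using this.neg
  · exact absurd rfl h.den_ne_one
  · exact h.inv_of_pos hx hxinv

lemma DepthRel.neg {x : ℚ} {n : ℕ} (h : DepthRel x n) : DepthRel (-x) n := by
  induction h with
  | int x hx => exact .int _ hx
  | step x u v m k hx hp _ _ ihu ihv => exact .step _ _ _ _ _ hx hp.neg ihu ihv

lemma DepthRel.add_intCast {x : ℚ} {n : ℕ} (h : DepthRel x n) (t : ℤ) : DepthRel (x + t) n := by
  induction h with
  | int x hx => exact .int _ (by rwa [Rat.add_intCast_den])
  | step x u v m k hx hp _ _ ihu ihv =>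
    exact .step _ _ _ _ _ (by rwa [Rat.add_intCast_den]) (hp.add_intCast t) ihu ihv

lemma DepthRel.sub_intCast {x : ℚ} {n : ℕ} (h : DepthRel x n) (t : ℤ) : DepthRel (x - t) n := by
  simpa [sub_eq_add_neg] using h.add_intCast (-t)

lemma exists_depthRel_inv_natCast (n : ℕ) : ∃ m ≤ 1, DepthRel (n : ℚ)⁻¹ m := by
  induction n with
  | zero => exact ⟨0, zero_le_one, .int _ (by simp)⟩
  | succ n ih =>
    rcases Nat.eq_zero_or_pos n with rfl | hn
    · exact ⟨0, zero_le_one, .int _ (by simp)⟩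
    obtain ⟨m, -, hm⟩ := ih
    -- `1/(n+1)` has the Farey parents `0/1` and `1/n`
    have hp : IsFareyParents ((n + 1 : ℕ) : ℚ)⁻¹ 0 (n : ℚ)⁻¹ := by
      refine ⟨0, 1, 1, n, le_rfl, by omega, ?_, ?_, by norm_num, by simp, by simp⟩
      · rw [Rat.inv_natCast_den_of_pos (by omega)]; push_cast; ring
      · rw [Rat.inv_natCast_num_of_pos (by omega)]; rfl
    have hden : ((n + 1 : ℕ) : ℚ)⁻¹.den ≠ 1 := by
      rw [Rat.inv_natCast_den_of_pos (by omega)]; omega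
    exact ⟨_, by omega, .step _ _ _ 0 m hden hp (.int 0 rfl) hm⟩

lemma exists_depthRel_inv_intCast (z : ℤ) : ∃ m ≤ 1, DepthRel (z : ℚ)⁻¹ m := by
  obtain ⟨n, rfl | rfl⟩ := Int.eq_nat_or_neg z
  · exact_mod_cast exists_depthRel_inv_natCast n
  · obtain ⟨m, hm, h⟩ := exists_depthRel_inv_natCast n
    exact ⟨m, hm, by simpa using h.neg⟩

lemma DepthRel.inv {x : ℚ} {n : ℕ} (h : DepthRel x n) : ∃ m ≤ n + 1, DepthRel x⁻¹ m := by
  induction h with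
  | int x hx =>
    rw [← Rat.coe_int_num_of_den_eq_one hx]
    exact exists_depthRel_inv_intCast _
  | step x u v m k hx hp _ _ ihu ihv =>
    by_cases hxinv : x⁻¹.den = 1
    · exact ⟨0, by omega, .int _ hxinv⟩
    obtain ⟨m', hm', hu⟩ := ihu
    obtain ⟨k', hk', hv⟩ := ihv
    exact ⟨_, by omega, .step _ _ _ _ _ hxinv (hp.inv hxinv) hu hv⟩

lemma IsFareyParents.exists_inv_sub_intCast {x u v : ℚ} {m k : ℕ} (hp : IsFareyParents x u v)
    (hv : DepthRel v k) (ih : u.den ≠ 1 → ∃ t : ℤ, ∃ m' < m, DepthRel (u - t)⁻¹ m') :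
    ∃ t : ℤ, ∃ m' ≤ m, DepthRel (x - t)⁻¹ m' := by
  obtain ⟨hden, hnum, hdet⟩ := isFareyParents_iff.1 hp
  by_cases hu1 : u.den = 1
  · -- `x - u` has numerator `∓1`, so its inverse is an integer
    refine ⟨u.num, 0, Nat.zero_le _, .int _ ?_⟩
    have hnum' : (x - u.num).num = -(u.num * v.den - u.den * v.num) := by
      rw [Rat.num_sub_intCast, ← hnum, ← hden, hu1]; push_cast; ring
    rcases Int.isUnit_iff.1 hdet with hδ | hδ <;> simp [Rat.den_inv, hnum', hδ]
  obtain ⟨t, m', hm', hu'⟩ := ih hu1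
  by_cases hxt : (x - t)⁻¹.den = 1
  · exact ⟨t, 0, Nat.zero_le _, .int _ hxt⟩
  obtain ⟨k', -, hv'⟩ := (hv.sub_intCast t).inv
  have hpt := (hp.sub_intCast t).inv hxt
  exact ⟨t, _, by omega, .step _ _ _ _ _ hxt hpt hu' hv'⟩

lemma DepthRel.exists_inv_sub_intCast {x : ℚ} {n : ℕ} (h : DepthRel x n) (hx : x.den ≠ 1) :
    ∃ t : ℤ, ∃ m < n, DepthRel (x - t)⁻¹ m := by
  induction hq : x.den using Nat.strong_induction_on generalizing x n with
  | _ q ih =>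
  cases h with
  | int _ hx' => exact absurd hx' hx
  | step _ u v m k _ hp hu hv =>
    have hden := (isFareyParents_iff.1 hp).1
    have := u.pos; have := v.pos
    have ihu : u.den ≠ 1 → ∃ t : ℤ, ∃ m' < m, DepthRel (u - t)⁻¹ m' :=
      fun hu1 => ih u.den (by omega) hu hu1 rfl
    have ihv : v.den ≠ 1 → ∃ t : ℤ, ∃ k' < k, DepthRel (v - t)⁻¹ k' :=
      fun hv1 => ih v.den (by omega) hv hv1 rfl
    rcases le_total m k with hmk | hkm
    · obtain ⟨t, m', hm', h'⟩ := hp.exists_inv_sub_intCast hv ihu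
      exact ⟨t, m', by omega, h'⟩
    · obtain ⟨t, k', hk', h'⟩ := hp.symm.exists_inv_sub_intCast hu ihv
      exact ⟨t, k', by omega, h'⟩

lemma fareyDepth_neg (x : ℚ) : fareyDepth (-x) = fareyDepth x := by
  unfold fareyDepth
  congr 1
  ext n
  exact ⟨fun h => by simpa using h.neg, DepthRel.neg⟩

lemma fareyDepth_add_intCast (x : ℚ) (t : ℤ) : fareyDepth (x + t) = fareyDepth x := by
  unfold fareyDepth
  congr 1
  ext n
  exact ⟨fun h => by simpa using h.sub_intCast t, fun h => h.add_intCast t⟩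

lemma fareyDepth_mul_add_intCast {σ : ℤ} (hσ : IsUnit σ) (x : ℚ) (t : ℤ) :
    fareyDepth (σ * x + t) = fareyDepth x := by
  rcases Int.isUnit_iff.1 hσ with rfl | rfl <;> simp [fareyDepth_add_intCast, fareyDepth_neg]

def contMat (l : List ℤ) : Matrix (Fin 2) (Fin 2) ℤ :=
  (l.map fun a => !![a, 1; 1, 0]).prod

@[simp] lemma contMat_nil : contMat [] = 1 := rfl

lemma contMat_cons (a : ℤ) (l : List ℤ) : contMat (a :: l) = !![a, 1; 1, 0] * contMat l := rfl

lemma contMat_reverse (l : List ℤ) : contMat l.reverse = (contMat l).transpose := by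
  rw [contMat, contMat, Matrix.transpose_list_prod, List.map_map, List.map_reverse]
  congr 3
  ext a i j
  fin_cases i <;> fin_cases j <;> rfl

lemma det_contMat (l : List ℤ) : (contMat l).det = (-1) ^ l.length := by
  induction l with
  | nil => simp
  | cons a l ih =>
    rw [contMat_cons, Matrix.det_mul, ih, Matrix.det_fin_two_of, List.length_cons, pow_succ]
    ring

lemma isUnit_det_contMat (l : List ℤ) : IsUnit (contMat l).det := by
  rw [det_contMat]; exact (isUnit_neg_one).pow _

@[simp] lemma contMat_cons_zero_zero (a : ℤ) (l : List ℤ) :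
    contMat (a :: l) 0 0 = a * contMat l 0 0 + contMat l 1 0 := by
  simp [contMat_cons, Matrix.mul_apply, Fin.sum_univ_two]

@[simp] lemma contMat_cons_one_zero (a : ℤ) (l : List ℤ) :
    contMat (a :: l) 1 0 = contMat l 0 0 := by
  simp [contMat_cons, Matrix.mul_apply, Fin.sum_univ_two]

-- The continued fraction evaluated through continuants; it agrees with `cfVal` as long as no
-- partial denominator vanishes, where the junk value `1 / 0 = 0` makes the two differ.
def cfRatio (l : List ℤ) : ℚ := (contMat l 1 0 : ℚ) / contMat l 0 0

lemma cfRatio_add_mul (a : ℤ) {l : List ℤ} (hl : contMat l 0 0 ≠ 0) :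
    (cfRatio l + a) * contMat l 0 0 = contMat (a :: l) 0 0 := by
  have : (contMat l 0 0 : ℚ) ≠ 0 := by exact_mod_cast hl
  rw [cfRatio, add_mul, div_mul_cancel₀ _ this, contMat_cons_zero_zero]
  push_cast
  ring

lemma cfRatio_cons (a : ℤ) {l : List ℤ} (hl : contMat l 0 0 ≠ 0) :
    cfRatio (a :: l) = (cfRatio l + a)⁻¹ := by
  have : (contMat l 0 0 : ℚ) ≠ 0 := by exact_mod_cast hl
  rw [cfRatio, ← cfRatio_add_mul a hl, contMat_cons_one_zero, div_mul_cancel_right₀ this]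

lemma cfRatio_reverse (l : List ℤ) : cfRatio l.reverse = (contMat l 0 1 : ℚ) / contMat l 0 0 := by
  simp [cfRatio, contMat_reverse]

lemma exists_depthRel_cfRatio (l : List ℤ) : ∃ m ≤ l.length, DepthRel (cfRatio l) m := by
  induction l with
  | nil => exact ⟨0, le_rfl, .int _ (by simp [cfRatio])⟩
  | cons a l ih =>
    by_cases hl : contMat l 0 0 = 0
    · -- the numerator `contMat l 0 0` of `cfRatio (a :: l)` vanishes
      exact ⟨0, Nat.zero_le _, .int _ (by simp [cfRatio, hl])⟩
    obtain ⟨m, hm, h⟩ := ih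
    obtain ⟨k, hk, h'⟩ := (h.add_intCast a).inv
    exact ⟨k, by simp only [List.length_cons]; omega, by rwa [cfRatio_cons a hl]⟩

lemma fareyDepth_cfRatio_le (l : List ℤ) : fareyDepth (cfRatio l) ≤ l.length := by
  obtain ⟨m, hm, h⟩ := exists_depthRel_cfRatio l
  exact (Nat.sInf_le h).trans hm

lemma DepthRel.exists_cfRatio_eq_sub_intCast {x : ℚ} {n : ℕ} (h : DepthRel x n) :
    ∃ (B : List ℤ) (t : ℤ), B.length ≤ n ∧ contMat B 0 0 ≠ 0 ∧ cfRatio B = x - t := by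
  induction n using Nat.strong_induction_on generalizing x with
  | _ n ih =>
  by_cases hx : x.den = 1
  · exact ⟨[], x.num, Nat.zero_le _, by simp, by simp [cfRatio, Rat.coe_int_num_of_den_eq_one hx]⟩
  obtain ⟨t, m, hmn, hm⟩ := h.exists_inv_sub_intCast hx
  obtain ⟨B, s, hB, hB0, hBx⟩ := ih m hmn hm
  have hxt : x - t ≠ 0 := sub_ne_zero.2 fun h0 => hx (by simp [h0])
  refine ⟨s :: B, t, by simp only [List.length_cons]; omega, ?_, ?_⟩
  · have : (contMat B 0 0 : ℚ) ≠ 0 := by exact_mod_cast hB0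
    rw [← Int.cast_ne_zero (α := ℚ), ← cfRatio_add_mul s hB0, hBx, sub_add_cancel]
    exact mul_ne_zero (inv_ne_zero hxt) this
  · rw [cfRatio_cons s hB0, hBx, sub_add_cancel, inv_inv]

lemma abs_contMat_one_zero_lt {l : List ℤ} (hl : ∀ a ∈ l, 2 ≤ |a|) :
    |contMat l 1 0| < |contMat l 0 0| := by
  induction l with
  | nil => simp
  | cons a l ih =>
    have ih := ih fun b hb => hl b (List.mem_cons_of_mem a hb)
    have ha := hl a List.mem_cons_self
    have := abs_sub_abs_le_abs_sub (a * contMat l 0 0) (-contMat l 1 0)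
    rw [abs_neg, sub_neg_eq_add, abs_mul] at this
    rw [contMat_cons_zero_zero, contMat_cons_one_zero]
    nlinarith [abs_nonneg (contMat l 1 0)]

lemma contMat_zero_zero_ne_zero {l : List ℤ} (hl : ∀ a ∈ l, 2 ≤ |a|) : contMat l 0 0 ≠ 0 :=
  abs_pos.1 ((abs_nonneg _).trans_lt (abs_contMat_one_zero_lt hl))

lemma cfVal_eq_cfRatio {l : List ℤ} (hl : ∀ a ∈ l, 2 ≤ |a|) : cfVal l = cfRatio l := by
  induction l with
  | nil => simp [cfVal, cfRatio]
  | cons a l ih =>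
    have hl' : ∀ b ∈ l, 2 ≤ |b| := fun b hb => hl b (List.mem_cons_of_mem a hb)
    rw [cfVal, ih hl', cfRatio_cons a (contMat_zero_zero_ne_zero hl'), one_div, add_comm]

lemma cfVal_map_neg (l : List ℤ) : cfVal (l.map (fun a => -a)) = -cfVal l := by
  induction l with
  | nil => simp [cfVal]
  | cons a l ih =>
    simp only [List.map_cons, cfVal, ih, one_div, Int.cast_neg]
    rw [← neg_add, inv_neg]

lemma fareyDepth_cfVal_reverse_le {l : List ℤ} (hl : ∀ a ∈ l, 2 ≤ |a|) :
    fareyDepth (cfVal l.reverse) ≤ fareyDepth (cfVal l) := by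
  have hl' : ∀ a ∈ l.reverse, 2 ≤ |a| := fun a ha => hl a (List.mem_reverse.1 ha)
  rw [cfVal_eq_cfRatio hl, cfVal_eq_cfRatio hl', cfRatio_reverse]
  obtain ⟨m, -, hm⟩ := exists_depthRel_cfRatio l
  have hx : DepthRel (cfRatio l) (fareyDepth (cfRatio l)) := Nat.sInf_mem ⟨m, hm⟩
  obtain ⟨B, t, hB, hB0, hBx⟩ := hx.exists_cfRatio_eq_sub_intCast
  obtain ⟨k, hk⟩ := div_eq_det_mul_div_add_of_div_eq_add (isUnit_det_contMat l)
    (isUnit_det_contMat B) (contMat_zero_zero_ne_zero hl) hB0 (t := t)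
    (by rw [← cfRatio, ← cfRatio, hBx, sub_add_cancel])
  calc fareyDepth ((contMat l 0 1 : ℚ) / contMat l 0 0)
      = fareyDepth (cfRatio B.reverse) := by
        rw [hk, cfRatio_reverse, ← Int.cast_mul,
          fareyDepth_mul_add_intCast ((isUnit_det_contMat l).mul (isUnit_det_contMat B))]
    _ ≤ B.length := by simpa using fareyDepth_cfRatio_le B.reverse
    _ ≤ fareyDepth (cfRatio l) := hB

lemma fareyDepth_cfVal_reverse {l : List ℤ} (hl : ∀ a ∈ l, 2 ≤ |a|) :
    fareyDepth (cfVal l.reverse) = fareyDepth (cfVal l) := by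
  refine le_antisymm (fareyDepth_cfVal_reverse_le hl) ?_
  simpa using fareyDepth_cfVal_reverse_le (l := l.reverse) fun a ha => hl a (List.mem_reverse.1 ha)

theorem stmt6_general (L : List ℤ) (h : ∀ a ∈ L, Even a ∧ a ≠ 0) :
    fareyDepth (cfVal L) = fareyDepth (cfVal L.reverse) ∧
      fareyDepth (cfVal L) = fareyDepth (cfVal (L.map (fun a => -a))) := by
  have hL : ∀ a ∈ L, 2 ≤ |a| := fun a ha =>
    Int.le_of_dvd (abs_pos.2 (h a ha).2) ((dvd_abs _ _).2 (h a ha).1.two_dvd)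
  exact ⟨(fareyDepth_cfVal_reverse hL).symm, by rw [cfVal_map_neg, fareyDepth_neg]⟩

/-- For a nonempty list `a` of even nonzero integers, `d([a]) = d([rev(a)])` and
`d([a]) = d([−a])`. -/
theorem stmt6 (L : List ℤ) (hL : L ≠ []) (h : ∀ a ∈ L, Even a ∧ a ≠ 0) :
    fareyDepth (cfVal L) = fareyDepth (cfVal L.reverse) ∧
      fareyDepth (cfVal L) = fareyDepth (cfVal (L.map (fun a => -a))) :=
  stmt6_general L h
end

section
/- Let a and b be nonempty lists of even nonzero integers and let c be any integer; if c = 0, assume additionally that the last entry of a equals the first entry of b. Then d([a ⧺ (2c) ⧺ b]) ≥ d([a]) + d([b]) − 1, where ⧺ denotes list concatenation and (2c) is the one-entry list containing 2c. -/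
namespace CF9

lemma isCoprime_num_den (x : ℚ) : IsCoprime x.num (x.den : ℤ) := by
  apply Int.isCoprime_iff_gcd_eq_one.mpr
  simpa [Int.gcd, Int.natAbs_natCast] using x.reduced

lemma rep_eq {n d : ℤ} (hd : 0 < d) (h : IsCoprime n d) :
    ((n:ℚ)/(d:ℚ)).num = n ∧ (((n:ℚ)/(d:ℚ)).den : ℤ) = d := by
  have hc : Nat.Coprime n.natAbs d.natAbs := Int.isCoprime_iff_gcd_eq_one.mp h
  exact ⟨Rat.num_div_eq_of_coprime hd hc, Rat.den_div_eq_of_coprime hd hc⟩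

lemma abs_num_le_den_iff (x : ℚ) : |x.num| ≤ (x.den : ℤ) ↔ |x| ≤ 1 := by
  have hd : (0:ℚ) < (x.den:ℚ) := by exact_mod_cast x.pos
  have hnum : (x.num : ℚ) = x * (x.den : ℚ) := by
    exact (div_eq_iff hd.ne').mp (Rat.num_div_den x)
  have key : ((|x.num| : ℤ) : ℚ) = |x| * (x.den:ℚ) := by
    rw [Int.cast_abs, hnum, abs_mul, abs_of_pos hd]
  constructor
  · intro h
    have h2 : |x| * (x.den:ℚ) ≤ 1 * (x.den:ℚ) := by
      rw [← key, one_mul]; exact_mod_cast h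
    exact le_of_mul_le_mul_right h2 hd
  · intro h
    have h2 : |x| * (x.den:ℚ) ≤ 1 * (x.den:ℚ) := mul_le_mul_of_nonneg_right h hd.le
    rw [← key, one_mul] at h2; exact_mod_cast h2

lemma abs_num_lt_den (x : ℚ) (h : |x| ≤ 1) (hden : x.den ≠ 1) : |x.num| < (x.den : ℤ) := by
  rcases lt_or_eq_of_le ((abs_num_le_den_iff x).mpr h) with h' | h'
  · exact h'
  · exfalso
    have hna : x.num.natAbs = x.den := by
      have := congrArg Int.natAbs h'
      simpa [Int.natAbs_abs, Int.natAbs_natCast] using this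
    have hred : Nat.gcd x.num.natAbs x.den = 1 := x.reduced
    rw [hna, Nat.gcd_self] at hred
    exact hden hred

lemma parents_data {x u v : ℚ} (h : IsFareyParents x u v) :
    ∃ a b c d : ℤ, 1 ≤ b ∧ 1 ≤ d ∧ b + d = (x.den : ℤ) ∧ a + c = x.num ∧
      (a * d - b * c = 1 ∨ a * d - b * c = -1) ∧
      u.num = a ∧ (u.den : ℤ) = b ∧ v.num = c ∧ (v.den : ℤ) = d ∧
      u = (a : ℚ) / (b : ℚ) ∧ v = (c : ℚ) / (d : ℚ) := by
  obtain ⟨a, b, c, d, hb, hd, hbd, hac, hdet, hu, hv⟩ := h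
  have hab : IsCoprime a b := by
    rcases hdet with h | h
    · exact ⟨d, -c, by linarith⟩
    · exact ⟨-d, c, by linarith⟩
  have hcd : IsCoprime c d := by
    rcases hdet with h | h
    · exact ⟨-b, a, by linarith⟩
    · exact ⟨b, -a, by linarith⟩
  have hru := rep_eq (by linarith : (0:ℤ) < b) hab
  have hrv := rep_eq (by linarith : (0:ℤ) < d) hcd
  exact ⟨a, b, c, d, hb, hd, hbd, hac, hdet,
    hu ▸ hru.1, hu ▸ hru.2, hv ▸ hrv.1, hv ▸ hrv.2, hu, hv⟩

lemma parents_den_ne_one {x u v : ℚ} (h : IsFareyParents x u v) : x.den ≠ 1 := by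
  obtain ⟨a, b, c, d, hb, hd, hbd, -⟩ := h
  intro h1
  rw [h1] at hbd
  omega

lemma parents_den_lt {x u v : ℚ} (h : IsFareyParents x u v) :
    u.den < x.den ∧ v.den < x.den := by
  obtain ⟨a, b, c, d, hb, hd, hbd, hac, hdet, hun, hud, hvn, hvd, -⟩ := parents_data h
  constructor
  · have h' : (u.den : ℤ) < (x.den : ℤ) := by omega
    exact_mod_cast h'
  · have h' : (v.den : ℤ) < (x.den : ℤ) := by omega
    exact_mod_cast h'

lemma parents_swap {x u v : ℚ} (h : IsFareyParents x u v) : IsFareyParents x v u := by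
  obtain ⟨a, b, c, d, hb, hd, hbd, hac, hdet, hu, hv⟩ := h
  refine ⟨c, d, a, b, hd, hb, by linarith, by linarith, ?_, hv, hu⟩
  rcases hdet with h | h
  · exact Or.inr (by linarith)
  · exact Or.inl (by linarith)

lemma parents_neg {x u v : ℚ} (h : IsFareyParents x u v) :
    IsFareyParents (-x) (-u) (-v) := by
  obtain ⟨a, b, c, d, hb, hd, hbd, hac, hdet, hu, hv⟩ := h
  refine ⟨-a, b, -c, d, hb, hd, by rw [Rat.den_neg_eq_den]; exact hbd,
    by rw [Rat.num_neg_eq_neg_num]; omega, ?_, by rw [hu]; push_cast; ring, by rw [hv]; push_cast; ring⟩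
  rcases hdet with h | h
  · exact Or.inr (by linarith)
  · exact Or.inl (by linarith)

lemma parents_abs_le {x u v : ℚ} (h : IsFareyParents x u v) (hx : |x| ≤ 1) :
    |u| ≤ 1 ∧ |v| ≤ 1 := by
  have key : ∀ y w : ℚ, IsFareyParents x y w → |y| ≤ 1 := by
    intro y w hyw
    obtain ⟨a, b, c, d, hb, hd, hbd, hac, hdet, hun, hud, hvn, hvd, -⟩ := parents_data hyw
    have hnum := abs_num_lt_den x hx (parents_den_ne_one hyw)
    rw [← abs_num_le_den_iff, hun, hud]
    rw [abs_lt] at hnum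
    rw [abs_le]
    constructor
    · by_contra hcon
      push_neg at hcon
      have h1 : a ≤ -b - 1 := by omega
      have h2 : c ≥ -d + 2 := by omega
      rcases hdet with h | h <;> nlinarith
    · by_contra hcon
      push_neg at hcon
      have h1 : a ≥ b + 1 := by omega
      have h2 : c ≤ d - 2 := by omega
      rcases hdet with h | h <;> nlinarith
  exact ⟨key u v h, key v u (parents_swap h)⟩

lemma parents_unique {x u v u' v' : ℚ} (h1 : IsFareyParents x u v)
    (h2 : IsFareyParents x u' v') : (u' = u ∧ v' = v) ∨ (u' = v ∧ v' = u) := by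
  obtain ⟨a, b, c, d, hb, hd, hbd, hac, hdet, hun, hud, hvn, hvd, hu, hv⟩ := parents_data h1
  obtain ⟨a', b', c', d', hb', hd', hbd', hac', hdet', hun', hud', hvn', hvd', hu', hv'⟩ :=
    parents_data h2
  set p := x.num
  set q := (x.den : ℤ)
  have hq2 : 2 ≤ q := by omega
  have hq0 : 0 < q := by omega
  have hco : IsCoprime p q := isCoprime_num_den x
  have key1 : a * d - b * c = a * q - b * p := by
    have hdq : d = q - b := by omega
    have hcp : c = p - a := by omega
    rw [hdq, hcp]; ring
  have key2 : a' * d' - b' * c' = a' * q - b' * p := by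
    have hdq : d' = q - b' := by omega
    have hcp : c' = p - a' := by omega
    rw [hdq, hcp]; ring
  rw [key1] at hdet
  rw [key2] at hdet'
  -- helper for the "same sign" conclusion
  have same : ∀ a₁ b₁ a₂ b₂ : ℤ, 1 ≤ b₁ → b₁ ≤ q - 1 → 1 ≤ b₂ → b₂ ≤ q - 1 →
      a₁ * q - b₁ * p = a₂ * q - b₂ * p → a₁ = a₂ ∧ b₁ = b₂ := by
    intro a₁ b₁ a₂ b₂ h₁ h₂ h₃ h₄ heq
    have hdvd : q ∣ (b₁ - b₂) * p := ⟨a₁ - a₂, by linarith⟩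
    have hdvd' : q ∣ (b₁ - b₂) := (hco.symm).dvd_of_dvd_mul_right hdvd
    obtain ⟨k, hk⟩ := hdvd'
    have hk1 : k < 1 := by
      by_contra hc
      push_neg at hc
      nlinarith
    have hk2 : -1 < k := by
      by_contra hc
      push_neg at hc
      nlinarith
    have : k = 0 := by omega
    rw [this, mul_zero] at hk
    have hbb : b₁ = b₂ := by omega
    refine ⟨?_, hbb⟩
    have : (a₁ - a₂) * q = 0 := by rw [hbb] at heq; linarith
    have := mul_eq_zero.mp this
    omega
  have hb1q : b ≤ q - 1 := by omega
  have hb2q : b' ≤ q - 1 := by omega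
  rcases hdet with hD | hD <;> rcases hdet' with hD' | hD'
  · obtain ⟨ea, eb⟩ := same a' b' a b hb' hb2q hb hb1q (by linear_combination hD' - hD)
    left
    have ec : c' = c := by omega
    have ed : d' = d := by omega
    rw [hu', hv', hu, hv, ea, eb, ec, ed]
    exact ⟨rfl, rfl⟩
  · -- det = 1, det' = -1 : swapped
    obtain ⟨ea, eb⟩ := same (p - a') (q - b') a b (by omega) (by omega) hb hb1q (by linear_combination -hD' - hD)
    right
    have e1 : a' = c := by omega
    have e2 : b' = d := by omega
    have e3 : c' = a := by omega
    have e4 : d' = b := by omega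
    rw [hu', hv', hu, hv, e1, e2, e3, e4]
    exact ⟨rfl, rfl⟩
  · obtain ⟨ea, eb⟩ := same (p - a') (q - b') a b (by omega) (by omega) hb hb1q (by linear_combination -hD' - hD)
    right
    have e1 : a' = c := by omega
    have e2 : b' = d := by omega
    have e3 : c' = a := by omega
    have e4 : d' = b := by omega
    rw [hu', hv', hu, hv, e1, e2, e3, e4]
    exact ⟨rfl, rfl⟩
  · obtain ⟨ea, eb⟩ := same a' b' a b hb' hb2q hb hb1q (by linear_combination hD' - hD)
    left
    have ec : c' = c := by omega
    have ed : d' = d := by omega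
    rw [hu', hv', hu, hv, ea, eb, ec, ed]
    exact ⟨rfl, rfl⟩

end CF9
namespace CF9

lemma exists_parents {x : ℚ} (h1 : x.den ≠ 1) : ∃ u v, IsFareyParents x u v := by
  set p := x.num with hp
  set q := (x.den : ℤ) with hqdef
  have hq0 : 0 < q := by positivity
  have hq : 2 ≤ q := by
    have := x.pos
    omega
  obtain ⟨m, n, hmn⟩ := isCoprime_num_den x
  set b := (-m) % q with hb
  have hb0 : 0 ≤ b := Int.emod_nonneg _ (by omega)
  have hblt : b < q := Int.emod_lt_of_pos _ hq0
  have hdvd : q ∣ b * p + 1 := by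
    refine ⟨n - ((-m) / q) * p, ?_⟩
    have hb' : b = -m - q * ((-m) / q) := by
      rw [hb]; exact Int.emod_def _ _
    rw [hb']
    linear_combination -hmn
  have hbne : b ≠ 0 := by
    intro h0
    rw [h0, zero_mul, zero_add] at hdvd
    have := Int.le_of_dvd (by norm_num) hdvd
    omega
  set a := (b * p + 1) / q with ha
  have haq : a * q = b * p + 1 := by
    rw [ha, mul_comm]
    exact Int.mul_ediv_cancel' hdvd
  refine ⟨(a : ℚ) / (b : ℚ), ((p - a : ℤ) : ℚ) / ((q - b : ℤ) : ℚ),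
    a, b, p - a, q - b, by omega, by omega, by omega, by omega, ?_, rfl, rfl⟩
  exact Or.inl (by linear_combination haq)

lemma depthRel_exists (x : ℚ) : ∃ n, DepthRel x n := by
  suffices H : ∀ N, ∀ x : ℚ, x.den ≤ N → ∃ n, DepthRel x n from H x.den x le_rfl
  intro N
  induction N with
  | zero => exact fun x hx => absurd x.pos (by omega)
  | succ N ih =>
    intro x hx
    by_cases h1 : x.den = 1
    · exact ⟨0, .int x h1⟩
    · obtain ⟨u, v, hp⟩ := exists_parents h1
      obtain ⟨hu, hv⟩ := parents_den_lt hp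
      obtain ⟨m, hm⟩ := ih u (by omega)
      obtain ⟨k, hk⟩ := ih v (by omega)
      exact ⟨1 + min m k, .step x u v m k h1 hp hm hk⟩

lemma depthRel_unique {x : ℚ} {n n' : ℕ} (h : DepthRel x n) (h' : DepthRel x n') : n = n' := by
  suffices H : ∀ N, ∀ x : ℚ, x.den ≤ N → ∀ n n', DepthRel x n → DepthRel x n' → n = n' from
    H x.den x le_rfl n n' h h'
  clear h h' n n' x
  intro N
  induction N with
  | zero => exact fun x hx => absurd x.pos (by omega)
  | succ N ih =>
    intro x hx n n' h h'
    cases h with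
    | int _ h1 =>
      cases h' with
      | int => rfl
      | step _ u v m k hne => exact absurd h1 hne
    | step _ u v m k hne hp hu hv =>
      cases h' with
      | int _ h1 => exact absurd h1 hne
      | step _ u' v' m' k' hne' hp' hu' hv' =>
        obtain ⟨hud, hvd⟩ := parents_den_lt hp
        rcases parents_unique hp hp' with ⟨e1, e2⟩ | ⟨e1, e2⟩
        · rw [e1] at hu'; rw [e2] at hv'
          rw [ih u (by omega) m m' hu hu', ih v (by omega) k k' hv hv']
        · rw [e1] at hu'; rw [e2] at hv'
          rw [ih v (by omega) k m' hv hu', ih u (by omega) m k' hu hv', min_comm]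

lemma fd_spec (x : ℚ) : DepthRel x (fareyDepth x) :=
  Nat.sInf_mem (depthRel_exists x)

lemma fd_eq {x : ℚ} {n : ℕ} (h : DepthRel x n) : fareyDepth x = n :=
  depthRel_unique (fd_spec x) h

lemma fd_int {x : ℚ} (h : x.den = 1) : fareyDepth x = 0 := fd_eq (.int x h)

lemma fd_parents {x u v : ℚ} (hp : IsFareyParents x u v) :
    fareyDepth x = 1 + min (fareyDepth u) (fareyDepth v) :=
  fd_eq (.step x u v _ _ (parents_den_ne_one hp) hp (fd_spec u) (fd_spec v))

lemma fd_neg (x : ℚ) : fareyDepth (-x) = fareyDepth x := by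
  have key : ∀ {y : ℚ} {n : ℕ}, DepthRel y n → DepthRel (-y) n := by
    intro y n h
    induction h with
    | int y h1 => exact .int _ (by rwa [Rat.den_neg_eq_den])
    | step y u v m k hne hp hu hv ihu ihv =>
      exact .step _ _ _ m k (by rwa [Rat.den_neg_eq_den]) (parents_neg hp) ihu ihv
  exact fd_eq (key (fd_spec x))

lemma fd_zero : fareyDepth 0 = 0 := fd_int rfl

def Nbr (x y : ℚ) : Prop :=
  x.num * y.den - y.num * x.den = 1 ∨ x.num * y.den - y.num * x.den = -1

lemma nbr_symm {x y : ℚ} (h : Nbr x y) : Nbr y x := by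
  rcases h with h | h
  · exact Or.inr (by linear_combination -h)
  · exact Or.inl (by linear_combination -h)

lemma parents_nbr {x u v : ℚ} (hp : IsFareyParents x u v) : Nbr u v := by
  obtain ⟨a, b, c, d, hb, hd, hbd, hac, hdet, hun, hud, hvn, hvd, -⟩ := parents_data hp
  unfold Nbr
  rw [hun, hud, hvn, hvd]
  rcases hdet with h | h
  · exact Or.inl (by linarith)
  · exact Or.inr (by linarith)

lemma parent_of_nbr {x y : ℚ} (h : Nbr x y) (hlt : y.den < x.den) :
    ∃ v, IsFareyParents x y v := by
  refine ⟨((x.num - y.num : ℤ) : ℚ) / ((x.den - y.den : ℤ) : ℚ),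
    y.num, (y.den : ℤ), x.num - y.num, (x.den : ℤ) - y.den,
    by exact_mod_cast y.pos, by omega, by ring, by ring, ?_, (Rat.num_div_den y).symm, by push_cast; rfl⟩
  rcases h with h | h
  · exact Or.inr (by linear_combination -h)
  · exact Or.inl (by linear_combination -h)

lemma nbr_fd {x y : ℚ} (h : Nbr x y) : fareyDepth x ≤ fareyDepth y + 1 := by
  suffices H : ∀ N, ∀ x y : ℚ, x.den + y.den ≤ N → Nbr x y →
      fareyDepth x ≤ fareyDepth y + 1 from H _ x y le_rfl h
  clear h x y
  intro N
  induction N with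
  | zero => exact fun x y hx => absurd x.pos (by omega)
  | succ N ih =>
    intro x y hN h
    rcases lt_trichotomy y.den x.den with hlt | heq | hgt
    · obtain ⟨v, hp⟩ := parent_of_nbr h hlt
      rw [fd_parents hp]
      have := min_le_left (fareyDepth y) (fareyDepth v)
      omega
    · have hden1 : x.den = 1 := by
        rcases h with h | h
        · have hd : (x.den : ℤ) ∣ 1 := ⟨x.num - y.num, by rw [heq] at h; linear_combination -h⟩
          have := Int.le_of_dvd (by norm_num) hd
          have := x.pos
          omega
        · have hd : (x.den : ℤ) ∣ 1 := ⟨y.num - x.num, by rw [heq] at h; linear_combination h⟩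
          have := Int.le_of_dvd (by norm_num) hd
          have := x.pos
          omega
      rw [fd_int hden1]
      omega
    · obtain ⟨v, hp⟩ := parent_of_nbr (nbr_symm h) hgt
      have hnv : Nbr x v := parents_nbr hp
      obtain ⟨hxd, hvd⟩ := parents_den_lt hp
      have hih : fareyDepth x ≤ fareyDepth v + 1 := ih x v (by omega) hnv
      rw [fd_parents hp]
      rcases min_cases (fareyDepth x) (fareyDepth v) with ⟨hm, -⟩ | ⟨hm, -⟩ <;> omega

lemma parent_fd_le {x u v : ℚ} (hp : IsFareyParents x u v) :
    fareyDepth u ≤ fareyDepth x ∧ fareyDepth v ≤ fareyDepth x := by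
  have h1 := nbr_fd (parents_nbr hp)
  have h2 := nbr_fd (nbr_symm (parents_nbr hp))
  rw [fd_parents hp]
  rcases min_cases (fareyDepth u) (fareyDepth v) with ⟨hm, -⟩ | ⟨hm, -⟩ <;> omega

end CF9
namespace CF9

lemma stp_neg (a : ℤ) (x : ℚ) : (1:ℚ)/(((-a : ℤ) : ℚ) + -x) = -(1/((a:ℚ) + x)) := by
  have h : ((-a : ℤ) : ℚ) + -x = -((a:ℚ) + x) := by push_cast; ring
  rw [h, div_neg]

lemma step_rep {a : ℤ} (ha : 2 ≤ a) {t : ℚ} (ht : |t| ≤ 1) :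
    (1/((a:ℚ)+t)).num = (t.den : ℤ) ∧
      ((1/((a:ℚ)+t)).den : ℤ) = a * (t.den : ℤ) + t.num := by
  set S : ℤ := (t.den : ℤ) with hSdef
  set R : ℤ := t.num with hRdef
  have hS : 0 < S := by rw [hSdef]; exact_mod_cast t.pos
  have hR : |R| ≤ S := (abs_num_le_den_iff t).mpr ht
  rw [abs_le] at hR
  have hD : 0 < a * S + R := by nlinarith
  have hco : IsCoprime S (a * S + R) := by
    have h1 := (isCoprime_num_den t).symm.add_mul_left_right a
    rwa [show R + S * a = a * S + R by ring] at h1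
  have heq : 1/((a:ℚ)+t) = (S : ℚ) / ((a * S + R : ℤ) : ℚ) := by
    have ht' : t = (R : ℚ) / (S : ℚ) := by
      rw [hRdef, hSdef]; push_cast; exact (Rat.num_div_den t).symm
    have hS0 : (S : ℚ) ≠ 0 := by exact_mod_cast hS.ne'
    rw [ht', show (a:ℚ) + (R:ℚ)/(S:ℚ) = ((a * S + R : ℤ) : ℚ) / (S:ℚ) by
      push_cast; field_simp, one_div_div]
  rw [heq]
  have h2 := rep_eq hD hco
  constructor
  · have := h2.1
    exact_mod_cast this
  · exact h2.2

lemma step_abs_le {a : ℤ} (ha : 2 ≤ |a|) {t : ℚ} (ht : |t| ≤ 1) :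
    |1/((a:ℚ)+t)| ≤ 1 := by
  have key : ∀ a : ℤ, 2 ≤ a → ∀ t : ℚ, |t| ≤ 1 → |1/((a:ℚ)+t)| ≤ 1 := by
    intro a ha t ht
    rw [← abs_num_le_den_iff, (step_rep ha ht).1, (step_rep ha ht).2]
    have hS : (0:ℤ) < (t.den : ℤ) := by exact_mod_cast t.pos
    have hR := abs_le.mp ((abs_num_le_den_iff t).mpr ht)
    rw [abs_le]
    constructor <;> nlinarith
  rcases abs_cases a with ⟨h1, h2⟩ | ⟨h1, h2⟩
  · exact key a (by linarith) t ht
  · have := key (-a) (by linarith) (-t) (by rwa [abs_neg])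
    rwa [stp_neg, abs_neg] at this

lemma step_den_ne_one {a : ℤ} (ha : 2 ≤ |a|) {t : ℚ} (ht : |t| ≤ 1) (htd : t.den ≠ 1) :
    (1/((a:ℚ)+t)).den ≠ 1 := by
  have key : ∀ a : ℤ, 2 ≤ a → ∀ t : ℚ, |t| ≤ 1 → t.den ≠ 1 → (1/((a:ℚ)+t)).den ≠ 1 := by
    intro a ha t ht htd
    have h2 := (step_rep ha ht).2
    have hS2 : (2:ℤ) ≤ (t.den : ℤ) := by
      have h := t.pos
      have : t.den ≠ 1 := htd
      omega
    have hR := abs_lt.mp (abs_num_lt_den t ht htd)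
    intro hone
    rw [hone] at h2
    have : ((1:ℕ) : ℤ) = 1 := rfl
    rw [this] at h2
    nlinarith
  rcases abs_cases a with ⟨h1, h2⟩ | ⟨h1, h2⟩
  · exact key a (by linarith) t ht htd
  · have := key (-a) (by linarith) (-t) (by rwa [abs_neg])
      (by rwa [Rat.den_neg_eq_den])
    rwa [stp_neg, Rat.den_neg_eq_den] at this

lemma nbr_neg {x y : ℚ} (h : Nbr x y) : Nbr (-x) (-y) := by
  rcases h with h | h
  · refine Or.inr ?_
    rw [Rat.num_neg_eq_neg_num, Rat.num_neg_eq_neg_num, Rat.den_neg_eq_den, Rat.den_neg_eq_den]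
    linarith
  · refine Or.inl ?_
    rw [Rat.num_neg_eq_neg_num, Rat.num_neg_eq_neg_num, Rat.den_neg_eq_den, Rat.den_neg_eq_den]
    linarith

lemma step_nbr {a : ℤ} (ha : 2 ≤ |a|) {w w' : ℚ} (hw : |w| ≤ 1) (hw' : |w'| ≤ 1)
    (h : Nbr w w') : Nbr (1/((a:ℚ)+w)) (1/((a:ℚ)+w')) := by
  have key : ∀ a : ℤ, 2 ≤ a → ∀ w w' : ℚ, |w| ≤ 1 → |w'| ≤ 1 → Nbr w w' →
      Nbr (1/((a:ℚ)+w)) (1/((a:ℚ)+w')) := by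
    intro a ha w w' hw hw' h
    unfold Nbr
    rw [(step_rep ha hw).1, (step_rep ha hw').1, (step_rep ha hw).2, (step_rep ha hw').2]
    rcases h with h | h
    · exact Or.inr (by linear_combination -h)
    · exact Or.inl (by linear_combination -h)
  rcases abs_cases a with ⟨h1, h2⟩ | ⟨h1, h2⟩
  · exact key a (by linarith) w w' hw hw' h
  · have := key (-a) (by linarith) (-w) (-w') (by rwa [abs_neg]) (by rwa [abs_neg]) (nbr_neg h)
    rw [stp_neg, stp_neg] at this
    rcases this with h' | h'
    · refine Or.inr ?_
      rw [Rat.num_neg_eq_neg_num, Rat.num_neg_eq_neg_num, Rat.den_neg_eq_den,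
        Rat.den_neg_eq_den] at h'
      linarith
    · refine Or.inl ?_
      rw [Rat.num_neg_eq_neg_num, Rat.num_neg_eq_neg_num, Rat.den_neg_eq_den,
        Rat.den_neg_eq_den] at h'
      linarith

lemma step_parents {a : ℤ} (ha : 2 ≤ |a|) {t u v : ℚ} (ht : |t| ≤ 1) (htd : t.den ≠ 1)
    (hp : IsFareyParents t u v) :
    IsFareyParents (1/((a:ℚ)+t)) (1/((a:ℚ)+u)) (1/((a:ℚ)+v)) := by
  have key : ∀ a : ℤ, 2 ≤ a → ∀ t u v : ℚ, |t| ≤ 1 → t.den ≠ 1 → IsFareyParents t u v →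
      IsFareyParents (1/((a:ℚ)+t)) (1/((a:ℚ)+u)) (1/((a:ℚ)+v)) := by
    intro a ha t u v ht htd hp
    obtain ⟨hu1, hv1⟩ := parents_abs_le hp ht
    obtain ⟨a', b, c', d, hb, hd, hbd, hac, hdet, hun, hud, hvn, hvd, hu, hv⟩ := parents_data hp
    have hau : |a'| ≤ b := by
      have := (abs_num_le_den_iff u).mpr hu1
      rwa [hun, hud] at this
    have hcv : |c'| ≤ d := by
      have := (abs_num_le_den_iff v).mpr hv1
      rwa [hvn, hvd] at this
    rw [abs_le] at hau hcv
    have hB : 1 ≤ a * b + a' := by nlinarith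
    have hD : 1 ≤ a * d + c' := by nlinarith
    refine ⟨b, a * b + a', d, a * d + c', hB, hD, ?_, ?_, ?_, ?_, ?_⟩
    · rw [(step_rep (by linarith) ht).2]
      linear_combination a * hbd + hac
    · rw [(step_rep (by linarith) ht).1]
      omega
    · rcases hdet with h | h
      · exact Or.inr (by linear_combination -h)
      · exact Or.inl (by linear_combination -h)
    · rw [hu]
      have hb0 : ((b:ℤ):ℚ) ≠ 0 := by
        have : (0:ℤ) < b := by omega
        exact_mod_cast this.ne'
      have hab0 : ((a * b + a' : ℤ):ℚ) ≠ 0 := by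
        have : (0:ℤ) < a * b + a' := by omega
        exact_mod_cast this.ne'
      rw [show (a:ℚ) + (a':ℚ)/((b:ℤ):ℚ) = ((a * b + a' : ℤ) : ℚ) / ((b:ℤ):ℚ) by
        push_cast at hab0 ⊢; field_simp; try ring, one_div_div]
    · rw [hv]
      have hd0 : ((d:ℤ):ℚ) ≠ 0 := by
        have : (0:ℤ) < d := by omega
        exact_mod_cast this.ne'
      have had0 : ((a * d + c' : ℤ):ℚ) ≠ 0 := by
        have : (0:ℤ) < a * d + c' := by omega
        exact_mod_cast this.ne'
      rw [show (a:ℚ) + (c':ℚ)/((d:ℤ):ℚ) = ((a * d + c' : ℤ) : ℚ) / ((d:ℤ):ℚ) by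
        push_cast at had0 ⊢; field_simp; try ring, one_div_div]
  rcases abs_cases a with ⟨h1, h2⟩ | ⟨h1, h2⟩
  · exact key a (by linarith) t u v ht htd hp
  · have := key (-a) (by linarith) (-t) (-u) (-v) (by rwa [abs_neg])
      (by rwa [Rat.den_neg_eq_den]) (parents_neg hp)
    rw [stp_neg, stp_neg, stp_neg] at this
    have h3 := parents_neg this
    rwa [neg_neg, neg_neg, neg_neg] at h3

end CF9
namespace CF9

def gmap : List ℤ → ℚ → ℚ
  | [], y => y
  | a :: L, y => 1 / ((a:ℚ) + gmap L y)

@[simp] lemma gmap_nil (y : ℚ) : gmap [] y = y := rfl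

@[simp] lemma gmap_cons (a : ℤ) (L : List ℤ) (y : ℚ) :
    gmap (a :: L) y = 1/((a:ℚ) + gmap L y) := rfl

lemma gmap_append (L₁ L₂ : List ℤ) (y : ℚ) : gmap (L₁ ++ L₂) y = gmap L₁ (gmap L₂ y) := by
  induction L₁ with
  | nil => simp
  | cons a L ih => simp [ih]

lemma cfVal_eq_gmap (L : List ℤ) : cfVal L = gmap L 0 := by
  induction L with
  | nil => rfl
  | cons a L ih => simp [cfVal, ih]

def ENZ (L : List ℤ) : Prop := ∀ a ∈ L, Even a ∧ a ≠ 0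

lemma enz_two_le {a : ℤ} (h : Even a) (h0 : a ≠ 0) : 2 ≤ |a| := by
  obtain ⟨k, rfl⟩ := h
  have hk : k ≠ 0 := by rintro rfl; simp at h0
  have h1 : 1 ≤ |k| := Int.one_le_abs (by omega)
  rw [show k + k = 2 * k by ring, abs_mul]
  norm_num
  linarith

lemma enz_cons {a : ℤ} {L : List ℤ} (h : ENZ (a :: L)) : 2 ≤ |a| ∧ ENZ L :=
  ⟨enz_two_le (h a (by simp)).1 (h a (by simp)).2, fun b hb => h b (by simp [hb])⟩

lemma gmap_abs_le {L : List ℤ} (h : ENZ L) {y : ℚ} (hy : |y| ≤ 1) : |gmap L y| ≤ 1 := by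
  induction L with
  | nil => simpa
  | cons a L ih =>
    obtain ⟨ha, hL⟩ := enz_cons h
    exact step_abs_le ha (ih hL)

lemma gmap_parents {L : List ℤ} (h : ENZ L) {t u v : ℚ} (ht : |t| ≤ 1) (htd : t.den ≠ 1)
    (hp : IsFareyParents t u v) :
    IsFareyParents (gmap L t) (gmap L u) (gmap L v) ∧ (gmap L t).den ≠ 1 ∧ |gmap L t| ≤ 1 := by
  induction L with
  | nil => exact ⟨hp, htd, ht⟩
  | cons a L ih =>
    obtain ⟨ha, hL⟩ := enz_cons h
    obtain ⟨hp', htd', ht'⟩ := ih hL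
    exact ⟨step_parents ha ht' htd' hp', step_den_ne_one ha ht' htd', step_abs_le ha ht'⟩

lemma gmap_nbr {L : List ℤ} (h : ENZ L) {w w' : ℚ} (hw : |w| ≤ 1) (hw' : |w'| ≤ 1)
    (hn : Nbr w w') : Nbr (gmap L w) (gmap L w') := by
  induction L with
  | nil => simpa
  | cons a L ih =>
    obtain ⟨ha, hL⟩ := enz_cons h
    exact step_nbr ha (gmap_abs_le hL hw) (gmap_abs_le hL hw') (ih hL)

lemma one_div_int_rep {k : ℤ} (hk : 1 ≤ k) :
    ((1:ℚ)/(k:ℚ)).num = 1 ∧ (((1:ℚ)/(k:ℚ)).den : ℤ) = k := by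
  have h := rep_eq (show (0:ℤ) < k by omega) (isCoprime_one_left (x := k))
  have hc : ((1:ℤ):ℚ) = (1:ℚ) := by norm_cast
  rw [hc] at h
  exact h

lemma one_div_abs_le {k : ℤ} (hk : 1 ≤ k) : |(1:ℚ)/(k:ℚ)| ≤ 1 := by
  rw [← abs_num_le_den_iff, (one_div_int_rep hk).1, (one_div_int_rep hk).2]
  simpa using hk

lemma parents_one_div {k : ℤ} (hk : 2 ≤ k) :
    IsFareyParents ((1:ℚ)/(k:ℚ)) ((1:ℚ)/((k - 1 : ℤ):ℚ)) 0 := by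
  refine ⟨1, k - 1, 0, 1, by omega, le_refl 1, ?_, ?_, Or.inl (by ring), ?_, by norm_num⟩
  · rw [(one_div_int_rep (by omega : (1:ℤ) ≤ k)).2]; ring
  · rw [(one_div_int_rep (by omega : (1:ℤ) ≤ k)).1]; ring
  · push_cast; ring

lemma one_div_neg_int (k : ℤ) : (1:ℚ)/(k:ℚ) = -((1:ℚ)/((-k : ℤ):ℚ)) := by
  have : ((-k : ℤ):ℚ) = -(k:ℚ) := by push_cast; ring
  rw [this, div_neg, neg_neg]

lemma fd_one_div_int_le_one (k : ℤ) : fareyDepth ((1:ℚ)/(k:ℚ)) ≤ 1 := by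
  have key : ∀ k : ℤ, 0 ≤ k → fareyDepth ((1:ℚ)/(k:ℚ)) ≤ 1 := by
    intro k hk
    rcases lt_or_ge k 2 with h | h
    · interval_cases k
      · norm_num [fd_zero]
      · norm_num
        rw [fd_int (by norm_num : (1:ℚ).den = 1)]
        omega
    · rw [fd_parents (parents_one_div h), fd_zero]
      simp
  rcases le_or_gt 0 k with h | h
  · exact key k h
  · rw [one_div_neg_int, fd_neg]
    exact key (-k) (by omega)

lemma fd_chain {L : List ℤ} (h : ENZ L) {j k : ℤ} (hj : 2 ≤ j) (hjk : j ≤ k) :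
    fareyDepth (gmap L ((1:ℚ)/(j:ℚ))) ≤ fareyDepth (gmap L ((1:ℚ)/(k:ℚ))) := by
  have step : ∀ m : ℤ, 2 ≤ m →
      fareyDepth (gmap L ((1:ℚ)/(m:ℚ))) ≤ fareyDepth (gmap L ((1:ℚ)/((m + 1 : ℤ):ℚ))) := by
    intro m hm
    have hpar := parents_one_div (show (2:ℤ) ≤ m + 1 by omega)
    rw [show m + 1 - 1 = m by ring] at hpar
    have hden : ((1:ℚ)/((m + 1 : ℤ):ℚ)).den ≠ 1 := by
      have h2 := (one_div_int_rep (by omega : (1:ℤ) ≤ m + 1)).2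
      intro hc
      rw [hc] at h2
      norm_num at h2
      omega
    have habs : |(1:ℚ)/((m + 1:ℤ):ℚ)| ≤ 1 := one_div_abs_le (by omega)
    exact (parent_fd_le (gmap_parents h habs hden hpar).1).1
  obtain ⟨n, rfl⟩ : ∃ n : ℕ, k = j + n := ⟨(k - j).toNat, by omega⟩
  clear hjk
  induction n with
  | zero => simp
  | succ n ih =>
    have e : (j + ((n:ℕ) + 1 : ℕ) : ℤ) = (j + (n:ℕ)) + 1 := by push_cast; ring
    rw [e]
    exact le_trans ih (step (j + (n:ℕ)) (by omega))

lemma gmap_neg (L : List ℤ) (y : ℚ) :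
    gmap (L.map (fun a => -a)) (-y) = -gmap L y := by
  induction L with
  | nil => simp
  | cons a L ih =>
    simp only [List.map_cons, gmap_cons, ih]
    exact stp_neg a (gmap L y)

lemma enz_neg {L : List ℤ} (h : ENZ L) : ENZ (L.map (fun a => -a)) := by
  intro b hb
  simp only [List.mem_map] at hb
  obtain ⟨a, ha, rfl⟩ := hb
  exact ⟨(h a ha).1.neg, by simpa using (h a ha).2⟩

end CF9
namespace CF9

lemma enz_append {L₁ L₂ : List ℤ} (h₁ : ENZ L₁) (h₂ : ENZ L₂) : ENZ (L₁ ++ L₂) := by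
  intro a ha
  rcases List.mem_append.mp ha with h | h
  · exact h₁ a h
  · exact h₂ a h

lemma int_of_den_one {y : ℚ} (h : y.den = 1) : y = ((y.num : ℤ) : ℚ) := by
  conv_lhs => rw [← Rat.num_div_den y, h]
  simp

lemma nbr_one_div_zero {k : ℤ} (hk : k ≠ 0) : Nbr ((1:ℚ)/(k:ℚ)) 0 := by
  have key : ∀ k : ℤ, 1 ≤ k → Nbr ((1:ℚ)/(k:ℚ)) 0 := by
    intro k hk
    unfold Nbr
    rw [(one_div_int_rep hk).1]
    simp
  rcases lt_or_ge 0 k with h | h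
  · exact key k (by omega)
  · have := nbr_neg (key (-k) (by omega))
    rw [← one_div_neg_int, neg_zero] at this
    exact this

lemma Kgen (A' M R : List ℤ) (hA : ENZ A') (hM : ENZ M) (hR : ENZ R) (m₁ : ℤ)
    (base : ∀ y : ℚ, y.den = 1 → |y| ≤ 1 →
      fareyDepth (gmap A' ((1:ℚ)/(m₁:ℚ))) + fareyDepth (gmap R y) ≤
        fareyDepth (gmap (A' ++ M) y) + 1) :
    ∀ (B : List ℤ), ENZ B → ∀ y : ℚ, |y| ≤ 1 →
      fareyDepth (gmap A' ((1:ℚ)/(m₁:ℚ))) + fareyDepth (gmap (R ++ B) y) ≤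
        fareyDepth (gmap (A' ++ M ++ B) y) + 1 := by
  intro B
  induction B using List.reverseRecOn with
  | nil =>
    intro _
    suffices H : ∀ N, ∀ y : ℚ, y.den ≤ N → |y| ≤ 1 →
        fareyDepth (gmap A' ((1:ℚ)/(m₁:ℚ))) + fareyDepth (gmap R y) ≤
          fareyDepth (gmap (A' ++ M) y) + 1 by
      intro y hy
      have := H y.den y le_rfl hy
      simpa using this
    intro N
    induction N with
    | zero => exact fun y hy => absurd y.pos (by omega)
    | succ N ihN =>
      intro y hyN hy1
      by_cases hd : y.den = 1
      · exact base y hd hy1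
      · obtain ⟨u, v, hp⟩ := exists_parents hd
        obtain ⟨hu1, hv1⟩ := parents_abs_le hp hy1
        obtain ⟨hud, hvd⟩ := parents_den_lt hp
        have e1 := fd_parents (gmap_parents (enz_append hA hM) hy1 hd hp).1
        have e2 := fd_parents (gmap_parents hR hy1 hd hp).1
        have i1 := ihN u (by omega) hu1
        have i2 := ihN v (by omega) hv1
        rw [e1, e2]
        rcases min_cases (fareyDepth (gmap R u)) (fareyDepth (gmap R v)) with ⟨h3, h4⟩ | ⟨h3, h4⟩ <;>
          rcases min_cases (fareyDepth (gmap (A' ++ M) u)) (fareyDepth (gmap (A' ++ M) v)) with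
            ⟨h5, h6⟩ | ⟨h5, h6⟩ <;> omega
  | append_singleton B b ihB =>
    intro hBenz y hy
    have hb : 2 ≤ |b| := enz_two_le (hBenz b (by simp)).1 (hBenz b (by simp)).2
    have hB' : ENZ B := fun a ha => hBenz a (by simp [ha])
    have hy' : |1/((b:ℚ) + y)| ≤ 1 := step_abs_le hb hy
    have l1 : R ++ (B ++ [b]) = (R ++ B) ++ [b] := by simp
    have l2 : A' ++ M ++ (B ++ [b]) = (A' ++ M ++ B) ++ [b] := by simp
    rw [l1, l2, gmap_append (R ++ B) [b] y, gmap_append (A' ++ M ++ B) [b] y]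
    simp only [gmap_cons, gmap_nil]
    exact ihB hB' (1/((b:ℚ) + y)) hy'

lemma gmap_one_div_neg (L : List ℤ) (k : ℤ) :
    gmap (L.map (fun a => -a)) ((1:ℚ)/((-k : ℤ):ℚ)) = - gmap L ((1:ℚ)/(k:ℚ)) := by
  have h1 : (1:ℚ)/((-k : ℤ):ℚ) = -((1:ℚ)/(k:ℚ)) := by
    rw [one_div_neg_int (-k), neg_neg]
  rw [h1, gmap_neg]

lemma base2_chain {A' : List ℤ} (hA : ENZ A') {b₁ : ℤ} (hb : 2 ≤ |b₁|) {e : ℤ}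
    (he : |e| ≤ 1) :
    fareyDepth (gmap A' ((1:ℚ)/(b₁:ℚ))) ≤
      fareyDepth (gmap A' ((1:ℚ)/((2 * b₁ + e : ℤ):ℚ))) := by
  rw [abs_le] at he
  rcases abs_cases b₁ with ⟨h1, h2⟩ | ⟨h1, h2⟩
  · exact fd_chain hA (by omega) (by omega)
  · have e1 : fareyDepth (gmap A' ((1:ℚ)/(b₁:ℚ))) =
        fareyDepth (gmap (A'.map (fun a => -a)) ((1:ℚ)/((-b₁ : ℤ):ℚ))) := by
      rw [gmap_one_div_neg, fd_neg]
    have e2 : fareyDepth (gmap A' ((1:ℚ)/((2 * b₁ + e : ℤ):ℚ))) =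
        fareyDepth (gmap (A'.map (fun a => -a)) ((1:ℚ)/((-(2 * b₁ + e) : ℤ):ℚ))) := by
      rw [gmap_one_div_neg, fd_neg]
    rw [e1, e2]
    have h3 : -(2 * b₁ + e) = 2 * (-b₁) + (-e) := by ring
    exact fd_chain (enz_neg hA) (by omega) (by omega)

end CF9
namespace CF9

lemma one_div_abs_le' {k : ℤ} (hk : k ≠ 0) : |(1:ℚ)/(k:ℚ)| ≤ 1 := by
  rcases lt_or_ge 0 k with h | h
  · exact one_div_abs_le (by omega)
  · rw [one_div_neg_int, abs_neg]
    exact one_div_abs_le (by omega)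

lemma base1 {A' : List ℤ} (hA : ENZ A') {an : ℤ} (hane : Even an) (hannz : an ≠ 0)
    {c : ℤ} (hc : c ≠ 0) :
    ∀ y : ℚ, y.den = 1 → |y| ≤ 1 →
      fareyDepth (gmap A' ((1:ℚ)/(an:ℚ))) + fareyDepth (gmap ([] : List ℤ) y) ≤
        fareyDepth (gmap (A' ++ [an, 2*c]) y) + 1 := by
  intro y hd hy
  have hynum : |y.num| ≤ 1 := by
    have := (abs_num_le_den_iff y).mpr hy
    rw [hd] at this
    exact_mod_cast this
  rw [abs_le] at hynum
  set k : ℤ := 2*c + y.num with hkdef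
  have hk : k ≠ 0 := by omega
  have hyval : y = ((y.num : ℤ):ℚ) := int_of_den_one hd
  have hrw : gmap (A' ++ [an, 2*c]) y = gmap (A' ++ [an]) ((1:ℚ)/(k:ℚ)) := by
    have hl : A' ++ [an, 2*c] = (A' ++ [an]) ++ [2*c] := by simp
    rw [hl, gmap_append]
    simp only [gmap_cons, gmap_nil]
    congr 1
    rw [hyval, hkdef]
    push_cast
    ring
  rw [hrw, gmap_nil, fd_int hd]
  have hAan : ENZ (A' ++ [an]) := enz_append hA (by
    intro a ha
    simp only [List.mem_singleton] at ha
    subst ha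
    exact ⟨hane, hannz⟩)
  have hnbr := gmap_nbr hAan (one_div_abs_le' hk) (by norm_num : |(0:ℚ)| ≤ 1)
    (nbr_one_div_zero hk)
  have hlip := nbr_fd (nbr_symm hnbr)
  have h0 : gmap (A' ++ [an]) 0 = gmap A' ((1:ℚ)/(an:ℚ)) := by
    rw [gmap_append]
    simp
  rw [h0] at hlip
  omega

lemma base2 {A' : List ℤ} (hA : ENZ A') {b₁ : ℤ} (hbe : Even b₁) (hbnz : b₁ ≠ 0) :
    ∀ y : ℚ, y.den = 1 → |y| ≤ 1 →
      fareyDepth (gmap A' ((1:ℚ)/(b₁:ℚ))) + fareyDepth (gmap [b₁] y) ≤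
        fareyDepth (gmap (A' ++ [2 * b₁]) y) + 1 := by
  intro y hd hy
  have hb2 : 2 ≤ |b₁| := enz_two_le hbe hbnz
  have hynum : |y.num| ≤ 1 := by
    have := (abs_num_le_den_iff y).mpr hy
    rw [hd] at this
    exact_mod_cast this
  have hyval : y = ((y.num : ℤ):ℚ) := int_of_den_one hd
  have h1 : gmap [b₁] y = (1:ℚ)/((b₁ + y.num : ℤ):ℚ) := by
    simp only [gmap_cons, gmap_nil]
    congr 1
    push_cast
    rw [← hyval]
  have h2 : gmap (A' ++ [2*b₁]) y = gmap A' ((1:ℚ)/((2*b₁ + y.num : ℤ):ℚ)) := by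
    rw [gmap_append]
    simp only [gmap_cons, gmap_nil]
    congr 2
    push_cast
    rw [← hyval]
  rw [h1, h2]
  have c1 : fareyDepth ((1:ℚ)/((b₁ + y.num : ℤ):ℚ)) ≤ 1 := fd_one_div_int_le_one _
  have c2 := base2_chain hA hb2 hynum
  omega

end CF9


/-- If `a` and `b` are nonempty lists of even nonzero integers and `c` is any integer,
where in case `c = 0` the last entry of `a` equals the first entry of `b`, then
`d([a ⧺ (2c) ⧺ b]) ≥ d([a]) + d([b]) − 1`. -/
theorem stmt9 (A B : List ℤ) (hA : A ≠ []) (hB : B ≠ [])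
    (hAe : ∀ a ∈ A, Even a ∧ a ≠ 0) (hBe : ∀ b ∈ B, Even b ∧ b ≠ 0)
    (c : ℤ) (hc : c = 0 → A.getLast hA = B.head hB) :
    fareyDepth (cfVal A) + fareyDepth (cfVal B) ≤
      fareyDepth (cfVal (A ++ (2 * c) :: B)) + 1 := by
  classical
  obtain ⟨A', an, rfl⟩ : ∃ A' an, A = A' ++ [an] := by
    rcases List.eq_nil_or_concat A with h | ⟨L, b, h⟩
    · exact absurd h hA
    · exact ⟨L, b, by rw [h, List.concat_eq_append]⟩
  have hA'enz : CF9.ENZ A' := fun a ha => hAe a (by simp [ha])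
  have hanE : Even an ∧ an ≠ 0 := hAe an (by simp)
  have hcfA : cfVal (A' ++ [an]) = CF9.gmap A' ((1:ℚ)/(an:ℚ)) := by
    rw [CF9.cfVal_eq_gmap, CF9.gmap_append]
    simp
  have hBenz : CF9.ENZ B := hBe
  by_cases hc0 : c = 0
  · subst hc0
    obtain ⟨b₁, B', rfl⟩ := List.exists_cons_of_ne_nil hB
    have hjb : an = b₁ := by
      have h := hc rfl
      have h3 : (A' ++ [an]).getLast hA = an := List.getLast_append_singleton A'
      rw [h3, List.head_cons] at h
      exact h
    subst hjb
    have hB'enz : CF9.ENZ B' := fun a ha => hBe a (by simp [ha])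
    have hval : cfVal ((A' ++ [an]) ++ (2*0) :: (an :: B')) =
        CF9.gmap (A' ++ [2*an] ++ B') 0 := by
      rw [CF9.cfVal_eq_gmap]
      have hl : (A' ++ [an]) ++ (2*0) :: (an :: B') = A' ++ ([an, 2*0, an] ++ B') := by simp
      rw [hl, CF9.gmap_append, CF9.gmap_append]
      rw [show A' ++ [2*an] ++ B' = A' ++ ([2*an] ++ B') by simp, CF9.gmap_append,
        CF9.gmap_append]
      congr 1
      set t' := CF9.gmap B' 0 with ht'def
      have ht' : |t'| ≤ 1 := CF9.gmap_abs_le hB'enz (by norm_num)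
      simp only [CF9.gmap_cons, CF9.gmap_nil]
      rw [show (2*0 : ℤ) = 0 by ring]
      push_cast
      rw [zero_add, one_div_one_div]
      congr 1
      ring
    rw [hval, hcfA]
    have Kres := CF9.Kgen A' [2*an] [an] hA'enz
      (by intro a ha; simp at ha; subst ha; exact ⟨by exact ⟨an, by ring⟩, by
        have := hanE.2; intro h; omega⟩)
      (by intro a ha; simp at ha; subst ha; exact hanE) an
      (CF9.base2 hA'enz hanE.1 hanE.2) B' hB'enz 0 (by norm_num)
    have hcfB : cfVal (an :: B') = CF9.gmap ([an] ++ B') 0 := by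
      rw [CF9.cfVal_eq_gmap]
      simp
    rw [hcfB]
    exact Kres
  · have Kres := CF9.Kgen A' [an, 2*c] [] hA'enz
      (by
        intro a ha
        simp only [List.mem_cons, List.mem_singleton, List.not_mem_nil, or_false] at ha
        rcases ha with rfl | rfl
        · exact hanE
        · exact ⟨⟨c, by ring⟩, by omega⟩)
      (by intro a ha; simp at ha) an
      (CF9.base1 hA'enz hanE.1 hanE.2 hc0) B hBenz 0 (by norm_num)
    have hl : A' ++ [an, 2*c] ++ B = (A' ++ [an]) ++ (2*c) :: B := by simp
    rw [hl] at Kres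
    have hcfB : cfVal B = CF9.gmap ([] ++ B) 0 := by
      rw [CF9.cfVal_eq_gmap]
      simp
    have hcfX : cfVal ((A' ++ [an]) ++ (2*c) :: B) =
        CF9.gmap ((A' ++ [an]) ++ (2*c) :: B) 0 := CF9.cfVal_eq_gmap _
    rw [hcfA, hcfB, hcfX]
    exact Kres
end

section
/- Let a be a nonempty list of integers all of whose entries are nonzero. If a list b parses with respect to a with data (n, (ε_1,…,ε_n), (c_1,…,c_{n−1})) and also with data (n′, (ε′_1,…,ε′_{n′}), (c′_1,…,c′_{n′−1})), then n = n′, ε_i = ε′_i for all i, and c_i = c′_i for all i; that is, the parsing of b with respect to a is unique. -/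
/-- The `i`-th tile (1-indexed) in a parsing with respect to `a`: `εᵢ·a` if `i` is odd
and `εᵢ·rev(a)` if `i` is even, where `ε·a` is entrywise multiplication. -/
def parseTile (a : List ℤ) (ε : ℕ → ℤ) (i : ℕ) : List ℤ :=
  (if i % 2 = 1 then a else a.reverse).map (fun x => ε i * x)

/-- The list `ε₁·a ⧺ (2c₁) ⧺ ε₂·rev(a) ⧺ (2c₂) ⧺ ⋯ ⧺ εₙ·a⁽ⁿ⁾` built from `n` tiles
separated by the connectors `(2c₁), …, (2c_{n−1})`. -/
def parseBuild (a : List ℤ) (ε c : ℕ → ℤ) : ℕ → List ℤ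
  | 0 => []
  | n + 1 =>
    if n = 0 then parseTile a ε 1
    else parseBuild a ε c n ++ (2 * c n) :: parseTile a ε (n + 1)

/-- `b` parses with respect to `a` with data `(n, (ε₁,…,εₙ), (c₁,…,c_{n−1}))`:
`b = ε₁·a ⧺ (2c₁) ⧺ ε₂·rev(a) ⧺ (2c₂) ⧺ ⋯ ⧺ εₙ·a⁽ⁿ⁾`, where each `εᵢ ∈ {1, −1}`,
each `cᵢ` is an integer, and `cᵢ = 0` implies `εᵢ = ε_{i+1}`. -/
def ParsesWith (a b : List ℤ) (n : ℕ) (ε c : ℕ → ℤ) : Prop :=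
  1 ≤ n ∧
  (∀ i, 1 ≤ i → i ≤ n → ε i = 1 ∨ ε i = -1) ∧
  (∀ i, 1 ≤ i → i ≤ n - 1 → c i = 0 → ε i = ε (i + 1)) ∧
  b = parseBuild a ε c n

/-!
A parsing into `n` tiles has length `n * (|a| + 1) - 1`, so `b` determines `n`. The tiles and
connectors then occupy the same positions in both parsings, and a tile `εᵢ·a` determines `εᵢ`
because `a` has a nonzero entry.
-/

lemma eq_of_map_mul_left_eq {M : Type*} [Mul M] [Zero M] [IsRightCancelMulZero M]
    {l : List M} {x s t : M} (hx : x ∈ l) (hx0 : x ≠ 0)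
    (h : l.map (s * ·) = l.map (t * ·)) : s = t :=
  mul_right_cancel₀ hx0 (List.map_inj_left.mp h x hx)

@[simp]
lemma parseTile_length (a : List ℤ) (ε : ℕ → ℤ) (i : ℕ) :
    (parseTile a ε i).length = a.length := by
  unfold parseTile; split <;> simp

lemma eq_of_parseTile_eq {a : List ℤ} {x : ℤ} (hx : x ∈ a) (hx0 : x ≠ 0) {ε ε' : ℕ → ℤ}
    {i : ℕ} (h : parseTile a ε i = parseTile a ε' i) : ε i = ε' i := by
  unfold parseTile at h
  split at h
  · exact eq_of_map_mul_left_eq hx hx0 h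
  · exact eq_of_map_mul_left_eq (List.mem_reverse.mpr hx) hx0 h

lemma parseBuild_one (a : List ℤ) (ε c : ℕ → ℤ) : parseBuild a ε c 1 = parseTile a ε 1 := rfl

lemma parseBuild_succ (a : List ℤ) (ε c : ℕ → ℤ) {n : ℕ} (hn : n ≠ 0) :
    parseBuild a ε c (n + 1) = parseBuild a ε c n ++ (2 * c n) :: parseTile a ε (n + 1) := by
  rw [parseBuild, if_neg hn]

lemma parseBuild_length_add_one (a : List ℤ) (ε c : ℕ → ℤ) {n : ℕ} (hn : 1 ≤ n) :
    (parseBuild a ε c n).length + 1 = n * (a.length + 1) := by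
  induction n, hn using Nat.le_induction with
  | base => simp [parseBuild_one]
  | succ n hn ih =>
    rw [parseBuild_succ a ε c (by omega), List.length_append, List.length_cons,
      parseTile_length]
    linarith

lemma parseBuild_inj {a : List ℤ} {x : ℤ} (hx : x ∈ a) (hx0 : x ≠ 0) {ε c ε' c' : ℕ → ℤ}
    {n : ℕ} (hn : 1 ≤ n) (h : parseBuild a ε c n = parseBuild a ε' c' n) :
    (∀ i, 1 ≤ i → i ≤ n → ε i = ε' i) ∧ (∀ i, 1 ≤ i → i ≤ n - 1 → c i = c' i) := by
  induction n, hn using Nat.le_induction with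
  | base =>
    refine ⟨fun i hi1 hi2 => ?_, fun i hi1 hi2 => by omega⟩
    obtain rfl : i = 1 := by omega
    exact eq_of_parseTile_eq hx hx0 h
  | succ n hn ih =>
    rw [parseBuild_succ a ε c (by omega), parseBuild_succ a ε' c' (by omega)] at h
    have hlen : (parseBuild a ε c n).length = (parseBuild a ε' c' n).length := by
      have := parseBuild_length_add_one a ε c hn
      have := parseBuild_length_add_one a ε' c' hn
      omega
    obtain ⟨hprefix, hconn, htile⟩ : parseBuild a ε c n = parseBuild a ε' c' n ∧
        2 * c n = 2 * c' n ∧ parseTile a ε (n + 1) = parseTile a ε' (n + 1) := by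
      simpa using List.append_inj h hlen
    obtain ⟨hε, hc⟩ := ih hprefix
    refine ⟨fun i hi1 hi2 => ?_, fun i hi1 hi2 => ?_⟩
    · rcases Nat.lt_or_ge i (n + 1) with hi | hi
      · exact hε i hi1 (by omega)
      · obtain rfl : i = n + 1 := by omega
        exact eq_of_parseTile_eq hx hx0 htile
    · rcases Nat.lt_or_ge i n with hi | hi
      · exact hc i hi1 (by omega)
      · obtain rfl : i = n := by omega
        omega

/-- If `a` is a nonempty list of nonzero integers, then the parsing of a list `b` with
respect to `a` is unique: the number of tiles `n`, the signs `ε₁, …, εₙ` and the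
connectors `c₁, …, c_{n−1}` are all determined by `b`. -/
theorem stmt10 (a b : List ℤ) (ha : a ≠ []) (h0 : ∀ x ∈ a, x ≠ 0)
    (n n' : ℕ) (ε c ε' c' : ℕ → ℤ)
    (h : ParsesWith a b n ε c) (h' : ParsesWith a b n' ε' c') :
    n = n' ∧ (∀ i, 1 ≤ i → i ≤ n → ε i = ε' i) ∧
      (∀ i, 1 ≤ i → i ≤ n - 1 → c i = c' i) := by
  obtain ⟨hn, -, -, rfl⟩ := h
  obtain ⟨hn', -, -, hb⟩ := h'
  have hnn : n = n' := by
    refine Nat.eq_of_mul_eq_mul_right (Nat.succ_pos a.length) ?_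
    rw [← parseBuild_length_add_one a ε c hn, ← parseBuild_length_add_one a ε' c' hn', hb]
  subst hnn
  obtain ⟨x, hx⟩ := List.exists_mem_of_ne_nil a ha
  exact ⟨rfl, parseBuild_inj hx (h0 x hx) hn hb⟩
end
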